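/- arXiv:2408.03743 — 6 statements merged into one kernel-verified Lean document; each statement's English description precedes it below -/
import Mathlib

section
/- Two Steiner triple systems of order 7 (Fano planes) on the same point set are orthogonal if and only if they are disjoint (have no blocks in common). -/
/-- A Steiner triple system: every block has 3 points and every pair of
distinct points lies in exactly one block. -/
def IsSteiner {V : Type*} [DecidableEq V] (B : Finset (Finset V)) : Prop :=
  (∀ b ∈ B, b.card = 3) ∧
  ∀ x y : V, x ≠ y → ∃! b : Finset V, b ∈ B ∧ x ∈ b ∧ y ∈ b

/-- A Fano plane: a Steiner triple system on a 7-point set. -/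
def IsFano {V : Type*} [DecidableEq V] [Fintype V] (B : Finset (Finset V)) : Prop :=
  Fintype.card V = 7 ∧ IsSteiner B

/-- Two systems on the same point set are disjoint if they share no block. -/
def DisjointSTS {V : Type*} [DecidableEq V] (B1 B2 : Finset (Finset V)) : Prop :=
  ∀ b : Finset V, ¬ (b ∈ B1 ∧ b ∈ B2)

/-- Orthogonality of two Steiner triple systems: disjoint, and two distinct
pairs lying in blocks of the first system with a common third point never have
the same third point in the second system. -/
def OrthogonalSTS {V : Type*} [DecidableEq V] (B1 B2 : Finset (Finset V)) : Prop :=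
  DisjointSTS B1 B2 ∧
  ∀ x y z u v a b : V, ({x, y} : Finset V) ≠ ({u, v} : Finset V) →
    ({x, y, z} : Finset V) ∈ B1 → ({u, v, z} : Finset V) ∈ B1 →
    ({x, y, a} : Finset V) ∈ B2 → ({u, v, b} : Finset V) ∈ B2 → a ≠ b

/-!
Let `{x, y, z}, {u, v, z}` be distinct blocks of a Fano plane. They cover only five of the
seven points, so `{x, y, u, v}ᶜ` is a 3-set containing `z`; the block through `z` and another
point of it meets neither of the two given blocks outside `z`, hence it is `{x, y, u, v}ᶜ`.
If orthogonality fails for disjoint Fano planes `B1, B2`, i.e. `{x, y, z}, {u, v, z} ∈ B1` and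
`{x, y, a}, {u, v, a} ∈ B2`, this applies in both planes and makes `{x, y, u, v}ᶜ` a common
block.
-/

theorem Finset.ne_of_card_triple_eq_three {α : Type*} [DecidableEq α] {x y z : α}
    (h : ({x, y, z} : Finset α).card = 3) : x ≠ y ∧ x ≠ z ∧ y ≠ z := by
  refine ⟨?_, ?_, ?_⟩ <;> rintro rfl <;> simp only [Finset.pair_comm,
    Finset.insert_eq_of_mem, Finset.mem_insert_of_mem, Finset.mem_singleton_self] at h <;>
    exact absurd h (Finset.card_le_two.trans_lt (by norm_num)).ne

namespace IsSteiner

variable {V : Type*} [DecidableEq V] {B : Finset (Finset V)}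

theorem eq_of_mem_of_mem (hB : IsSteiner B) {p q : V} (hpq : p ≠ q) {b c : Finset V}
    (hb : b ∈ B) (hc : c ∈ B) (hpb : p ∈ b) (hqb : q ∈ b) (hpc : p ∈ c) (hqc : q ∈ c) :
    b = c :=
  (hB.2 p q hpq).unique ⟨hb, hpb, hqb⟩ ⟨hc, hpc, hqc⟩

theorem notMem_of_ne_triple (hB : IsSteiner B) {x y p : V} {c : Finset V}
    (h : ({x, y, p} : Finset V) ∈ B) (hc : c ∈ B) (hpc : p ∈ c) (hne : c ≠ {x, y, p}) :
    x ∉ c ∧ y ∉ c := by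
  obtain ⟨-, hxp, hyp⟩ := Finset.ne_of_card_triple_eq_three (hB.1 _ h)
  exact ⟨fun hxc => hne (hB.eq_of_mem_of_mem hxp hc h hxc hpc (by simp) (by simp)),
    fun hyc => hne (hB.eq_of_mem_of_mem hyp hc h hyc hpc (by simp) (by simp))⟩

theorem compl_mem_of_card_eq_seven [Fintype V] (hB : IsSteiner B) (hV : Fintype.card V = 7)
    {x y u v p : V} (hxy : ({x, y, p} : Finset V) ∈ B) (huv : ({u, v, p} : Finset V) ∈ B)
    (hne : ({x, y} : Finset V) ≠ {u, v}) : ({x, y, u, v} : Finset V)ᶜ ∈ B := by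
  obtain ⟨hxy', hxp, hyp⟩ := Finset.ne_of_card_triple_eq_three (hB.1 _ hxy)
  obtain ⟨huv', hup, hvp⟩ := Finset.ne_of_card_triple_eq_three (hB.1 _ huv)
  have hblocks : ({u, v, p} : Finset V) ≠ {x, y, p} := fun h => hne <| by
    have := congrArg (·.erase p) h
    simpa [Finset.erase_insert_of_ne, hxp, hyp, hup, hvp, eq_comm] using this
  obtain ⟨hxuv, hyuv⟩ := hB.notMem_of_ne_triple hxy huv (by simp) hblocks
  simp only [Finset.mem_insert, Finset.mem_singleton, not_or] at hxuv hyuv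
  set W : Finset V := {x, y, u, v}
  have hWc : Wᶜ.card = 3 := by
    rw [Finset.card_compl, hV, Finset.card_eq_four.mpr
      ⟨x, y, u, v, hxy', hxuv.1, hxuv.2.1, hyuv.1, hyuv.2.1, huv', rfl⟩]
  obtain ⟨q, hqW, hqp⟩ := Wᶜ.exists_mem_ne (by omega) p
  obtain ⟨c, ⟨hc, hpc, hqc⟩, -⟩ := hB.2 p q hqp.symm
  simp only [W, Finset.mem_compl, Finset.mem_insert, Finset.mem_singleton, not_or] at hqW
  obtain ⟨hqx, hqy, hqu, hqv⟩ := hqW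
  have hqxy : q ∉ ({x, y, p} : Finset V) := by simp [hqx, hqy, hqp]
  have hquv : q ∉ ({u, v, p} : Finset V) := by simp [hqu, hqv, hqp]
  obtain ⟨hxc, hyc⟩ := hB.notMem_of_ne_triple hxy hc hpc (by rintro rfl; exact hqxy hqc)
  obtain ⟨huc, hvc⟩ := hB.notMem_of_ne_triple huv hc hpc (by rintro rfl; exact hquv hqc)
  have hcW : c ⊆ Wᶜ := fun w hw => by
    simp only [W, Finset.mem_compl, Finset.mem_insert, Finset.mem_singleton]
    rintro (rfl | rfl | rfl | rfl) <;> contradiction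
  rwa [← Finset.eq_of_subset_of_card_le hcW (by rw [hWc, hB.1 c hc])]

end IsSteiner

/-- Two Fano planes on the same point set are orthogonal iff they are disjoint. -/
theorem orthogonal_iff_disjoint_of_fano {V : Type*} [DecidableEq V] [Fintype V]
    (B1 B2 : Finset (Finset V)) (h1 : IsFano B1) (h2 : IsFano B2) :
    OrthogonalSTS B1 B2 ↔ DisjointSTS B1 B2 := by
  refine ⟨And.left, fun hd => ⟨hd, ?_⟩⟩
  rintro x y z u v a b hne hxyz huvz hxya huva rfl
  exact hd _ ⟨h1.2.compl_mem_of_card_eq_seven h1.1 hxyz huvz hne,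
    h2.2.compl_mem_of_card_eq_seven h2.1 hxya huva hne⟩
end

section
/- The group of permutations of Z/7 that are simultaneously automorphisms of the Fano plane with blocks { {i,i+1,i+3} : i ∈ Z/7 } and of the orthogonal Fano plane with blocks { {i,i+1,i+5} : i ∈ Z/7 } has order 21 and is non-abelian; hence it is isomorphic to the Frobenius group F21 of order 21. -/
/-- A permutation is an automorphism of a block set if it maps blocks to blocks. -/
def IsAutomorphism {V : Type*} [DecidableEq V] (B : Finset (Finset V)) (σ : Equiv.Perm V) : Prop :=
  ∀ b : Finset V, b.image σ ∈ B ↔ b ∈ B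

/-- The group of all automorphisms of a block set, as a subgroup of the
permutation group of the points. -/
def autGroup {V : Type*} [DecidableEq V] (B : Finset (Finset V)) : Subgroup (Equiv.Perm V) where
  carrier := {σ | IsAutomorphism B σ}
  one_mem' := by intro b; simp [Finset.image_id]
  mul_mem' := by
    intro σ τ hσ hτ
    intro b
    have h : Finset.image (⇑(σ * τ)) b = Finset.image ⇑σ (Finset.image ⇑τ b) := by
      rw [Finset.image_image]; rfl
    rw [h, hσ (Finset.image ⇑τ b), hτ b]
  inv_mem' := by
    intro σ hσ
    intro b
    have h : Finset.image ⇑σ (Finset.image ⇑σ⁻¹ b) = b := by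
      ext z
      simp
    have h2 := hσ (Finset.image ⇑σ⁻¹ b)
    rw [h] at h2
    exact h2.symm

/-- The Fano plane on `ZMod 7` with blocks `{i, i+1, i+3}`. -/
def fanoB1 : Finset (Finset (ZMod 7)) :=
  Finset.univ.image (fun i : ZMod 7 => ({i, i + 1, i + 3} : Finset (ZMod 7)))

/-- The Fano plane on `ZMod 7` with blocks `{i, i+1, i+5}`. -/
def fanoB2 : Finset (Finset (ZMod 7)) :=
  Finset.univ.image (fun i : ZMod 7 => ({i, i + 1, i + 5} : Finset (ZMod 7)))

/-- The permutation `x ↦ 2x` of `ZMod 7`. -/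
def lam2 : Equiv.Perm (ZMod 7) :=
  ⟨fun x => 2 * x, fun x => 4 * x, by decide, by decide⟩

/-- The permutation `x ↦ x + 1` of `ZMod 7`. -/
def tau1 : Equiv.Perm (ZMod 7) :=
  ⟨fun x => x + 1, fun x => x - 1, by decide, by decide⟩

/-- The Frobenius group of order 21, realized as the subgroup of `Perm (ZMod 7)`
generated by `x ↦ 2x` and `x ↦ x + 1`. -/
def F21 : Subgroup (Equiv.Perm (ZMod 7)) := Subgroup.closure {lam2, tau1}

/-!
The translation `x ↦ x + 1` and the multiplication `x ↦ 2x` preserve both planes, and they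
generate the 21 maps `x ↦ 2 ^ j * x + i`. Conversely, every nonzero residue mod 7 is `± 2 ^ j`,
so any common automorphism `σ` can be corrected by one of these maps `g` so that `g⁻¹ * σ` fixes
`0` and sends `1` to `1` or to `-1`. In each plane the line through two points is unique, so the
images of `0` and `1` determine those of the third points of the lines through them, and chasing
lines alternately in the two planes shows that the first case forces the identity while the
second is contradictory.
-/

section Steiner

variable {V : Type*} [DecidableEq V] {B : Finset (Finset V)}

theorem isSteiner_iff_card_filter :
    IsSteiner B ↔ (∀ b ∈ B, b.card = 3) ∧
      ∀ x y : V, x ≠ y → (B.filter fun b => x ∈ b ∧ y ∈ b).card = 1 := by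
  simp only [IsSteiner, Finset.card_eq_one_iff_existsUnique, Finset.mem_filter]

theorem IsSteiner.eq_of_mem (hB : IsSteiner B) {x y z w : V} (hxy : x ≠ y)
    (hz : {x, y, z} ∈ B) (hw : {x, y, w} ∈ B) : z = w := by
  obtain ⟨b, -, hb⟩ := hB.2 x y hxy
  have hzw : ({x, y, z} : Finset V) = {x, y, w} :=
    (hb _ ⟨hz, by simp, by simp⟩).trans (hb _ ⟨hw, by simp, by simp⟩).symm
  have hz3 := hB.1 _ hz
  have hzxy : z ≠ x ∧ z ≠ y := by grind [Finset.card_le_two]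
  have hzmem : z ∈ ({x, y, w} : Finset V) := hzw ▸ by simp
  simp only [Finset.mem_insert, Finset.mem_singleton] at hzmem
  tauto

theorem image_mem_of_mem_autGroup {σ : Equiv.Perm V} (hσ : σ ∈ autGroup B) {x y z : V}
    (h : {x, y, z} ∈ B) : {σ x, σ y, σ z} ∈ B := by
  simpa only [Finset.image_insert, Finset.image_singleton] using (hσ {x, y, z}).2 h

theorem IsSteiner.apply_eq_of_mem (hB : IsSteiner B) {σ : Equiv.Perm V} (hσ : σ ∈ autGroup B)
    {x y z x' y' w : V} (hx : σ x = x') (hy : σ y = y') (hxy : x' ≠ y')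
    (hz : {x, y, z} ∈ B) (hw : {x', y', w} ∈ B) : σ z = w := by
  subst hx hy
  exact hB.eq_of_mem hxy (image_mem_of_mem_autGroup hσ hz) hw

end Steiner

set_option maxRecDepth 8000 in
theorem isFano_fanoB1 : IsFano fanoB1 := ⟨rfl, isSteiner_iff_card_filter.2 (by decide)⟩

set_option maxRecDepth 8000 in
theorem isFano_fanoB2 : IsFano fanoB2 := ⟨rfl, isSteiner_iff_card_filter.2 (by decide)⟩

set_option maxRecDepth 8000 in
theorem tau1_mem_commonAut : tau1 ∈ autGroup fanoB1 ⊓ autGroup fanoB2 :=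
  ⟨show IsAutomorphism fanoB1 tau1 by unfold IsAutomorphism; decide,
    show IsAutomorphism fanoB2 tau1 by unfold IsAutomorphism; decide⟩

set_option maxRecDepth 8000 in
theorem lam2_mem_commonAut : lam2 ∈ autGroup fanoB1 ⊓ autGroup fanoB2 :=
  ⟨show IsAutomorphism fanoB1 lam2 by unfold IsAutomorphism; decide,
    show IsAutomorphism fanoB2 lam2 by unfold IsAutomorphism; decide⟩

theorem F21_le_commonAut : F21 ≤ autGroup fanoB1 ⊓ autGroup fanoB2 :=
  (Subgroup.closure_le _).2 <| by
    rintro _ (rfl | rfl)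
    exacts [lam2_mem_commonAut, tau1_mem_commonAut]

theorem eq_one_of_mem_commonAut {σ : Equiv.Perm (ZMod 7)}
    (hσ : σ ∈ autGroup fanoB1 ⊓ autGroup fanoB2) (h0 : σ 0 = 0) (h1 : σ 1 = 1) : σ = 1 := by
  have h3 : σ 3 = 3 :=
    isFano_fanoB1.2.apply_eq_of_mem hσ.1 h0 h1 (by decide) (by decide) (by decide)
  have h5 : σ 5 = 5 :=
    isFano_fanoB2.2.apply_eq_of_mem hσ.2 h0 h1 (by decide) (by decide) (by decide)
  have h2 : σ 2 = 2 :=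
    isFano_fanoB2.2.apply_eq_of_mem hσ.2 h0 h3 (by decide) (by decide) (by decide)
  have h4 : σ 4 = 4 :=
    isFano_fanoB2.2.apply_eq_of_mem hσ.2 h1 h3 (by decide) (by decide) (by decide)
  have h6 : σ 6 = 6 :=
    isFano_fanoB2.2.apply_eq_of_mem hσ.2 h5 h3 (by decide) (by decide) (by decide)
  ext x
  fin_cases x <;> assumption

theorem apply_one_ne_neg_one_of_mem_commonAut {σ : Equiv.Perm (ZMod 7)}
    (hσ : σ ∈ autGroup fanoB1 ⊓ autGroup fanoB2) (h0 : σ 0 = 0) : σ 1 ≠ -1 := by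
  intro h1
  have h3 : σ 3 = 2 :=
    isFano_fanoB1.2.apply_eq_of_mem hσ.1 h0 h1 (by decide) (by decide) (by decide)
  have h5 : σ 5 = 4 :=
    isFano_fanoB2.2.apply_eq_of_mem hσ.2 h0 h1 (by decide) (by decide) (by decide)
  have h4 : σ 4 = 5 :=
    isFano_fanoB1.2.apply_eq_of_mem hσ.1 h0 h5 (by decide) (by decide) (by decide)
  have h4' : σ 4 = 1 :=
    isFano_fanoB2.2.apply_eq_of_mem hσ.2 h1 h3 (by decide) (by decide) (by decide)
  exact absurd (h4.symm.trans h4') (by decide)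

@[simp] theorem tau1_apply (x : ZMod 7) : tau1 x = x + 1 := rfl

@[simp] theorem lam2_apply (x : ZMod 7) : lam2 x = 2 * x := rfl

theorem tau1_pow_apply (i : ℕ) (x : ZMod 7) : (tau1 ^ i) x = x + i := by
  induction i with
  | zero => simp
  | succ i ih => rw [pow_succ', Equiv.Perm.mul_apply, ih, tau1_apply]; push_cast; ring

theorem lam2_pow_apply (j : ℕ) (x : ZMod 7) : (lam2 ^ j) x = 2 ^ j * x := by
  induction j with
  | zero => simp
  | succ j ih => rw [pow_succ', Equiv.Perm.mul_apply, ih, lam2_apply]; ring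

theorem tau1_pow_mul_lam2_pow_apply (i j : ℕ) (x : ZMod 7) :
    (tau1 ^ i * lam2 ^ j) x = 2 ^ j * x + i := by
  rw [Equiv.Perm.mul_apply, lam2_pow_apply, tau1_pow_apply]

def f21Elems : Finset (Equiv.Perm (ZMod 7)) :=
  (Finset.range 7 ×ˢ Finset.range 3).image fun p => tau1 ^ p.1 * lam2 ^ p.2

theorem card_f21Elems : f21Elems.card = 21 := by decide

theorem coe_f21Elems_subset_F21 : (f21Elems : Set (Equiv.Perm (ZMod 7))) ⊆ F21 := by
  intro σ hσ
  obtain ⟨⟨i, j⟩, -, rfl⟩ := Finset.mem_image.1 hσ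
  exact mul_mem (pow_mem (Subgroup.subset_closure (by simp)) i)
    (pow_mem (Subgroup.subset_closure (by simp)) j)

theorem exists_eq_two_pow_or_eq_neg_two_pow (a : ZMod 7) (ha : a ≠ 0) :
    ∃ j < 3, a = 2 ^ j ∨ a = -2 ^ j := by
  revert a; decide

theorem coe_commonAut_subset_f21Elems :
    ((autGroup fanoB1 ⊓ autGroup fanoB2 : Subgroup (Equiv.Perm (ZMod 7))) : Set _) ⊆
      (f21Elems : Set (Equiv.Perm (ZMod 7))) := by
  intro σ hσ
  obtain ⟨j, hj, hσ1⟩ := exists_eq_two_pow_or_eq_neg_two_pow (σ 1 - σ 0)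
    (sub_ne_zero.2 (σ.injective.ne (by decide)))
  set g := tau1 ^ (σ 0).val * lam2 ^ j
  have hg_apply (x : ZMod 7) : g x = 2 ^ j * x + σ 0 := by
    rw [tau1_pow_mul_lam2_pow_apply, ZMod.natCast_zmod_val]
  have hg_mem : g ∈ f21Elems :=
    Finset.mem_image.2 ⟨((σ 0).val, j), by simp [ZMod.val_lt, hj], rfl⟩
  have hρ : g⁻¹ * σ ∈ autGroup fanoB1 ⊓ autGroup fanoB2 :=
    mul_mem (inv_mem (F21_le_commonAut (coe_f21Elems_subset_F21 hg_mem))) hσ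
  have hρ0 : (g⁻¹ * σ) 0 = 0 := by
    rw [Equiv.Perm.mul_apply, Equiv.Perm.inv_eq_iff_eq, hg_apply]; ring
  rcases hσ1 with hσ1 | hσ1
  · have hρ1 : (g⁻¹ * σ) 1 = 1 := by
      rw [Equiv.Perm.mul_apply, Equiv.Perm.inv_eq_iff_eq, hg_apply]; linear_combination hσ1
    rwa [← inv_mul_eq_one.1 (eq_one_of_mem_commonAut hρ hρ0 hρ1)]
  · have hρ1 : (g⁻¹ * σ) 1 = -1 := by
      rw [Equiv.Perm.mul_apply, Equiv.Perm.inv_eq_iff_eq, hg_apply]; linear_combination hσ1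
    exact absurd hρ1 (apply_one_ne_neg_one_of_mem_commonAut hρ hρ0)

/-- The group of common automorphisms of the two orthogonal Fano planes `fanoB1`
and `fanoB2` has order 21 and is non-abelian, hence is isomorphic to the
Frobenius group `F21` of order 21. -/
theorem commonAut_card_21_nonabelian_isoF21 :
    Nat.card (autGroup fanoB1 ⊓ autGroup fanoB2 : Subgroup (Equiv.Perm (ZMod 7))) = 21 ∧
    (∃ σ τ : (autGroup fanoB1 ⊓ autGroup fanoB2 : Subgroup (Equiv.Perm (ZMod 7))),
      σ * τ ≠ τ * σ) ∧
    Nonempty ((autGroup fanoB1 ⊓ autGroup fanoB2 : Subgroup (Equiv.Perm (ZMod 7))) ≃* F21) := by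
  have hcoe : ((autGroup fanoB1 ⊓ autGroup fanoB2 : Subgroup (Equiv.Perm (ZMod 7))) : Set _) =
      (f21Elems : Set (Equiv.Perm (ZMod 7))) :=
    coe_commonAut_subset_f21Elems.antisymm (coe_f21Elems_subset_F21.trans F21_le_commonAut)
  have hF21 : autGroup fanoB1 ⊓ autGroup fanoB2 = F21 :=
    le_antisymm (coe_commonAut_subset_f21Elems.trans coe_f21Elems_subset_F21) F21_le_commonAut
  refine ⟨?_, ⟨⟨lam2, lam2_mem_commonAut⟩, ⟨tau1, tau1_mem_commonAut⟩, ?_⟩,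
    ⟨MulEquiv.subgroupCongr hF21⟩⟩
  · rw [← SetLike.coe_sort_coe, hcoe, Nat.card_coe_set_eq, Set.ncard_coe_finset, card_f21Elems]
  · exact fun h => absurd (congrArg (fun σ => σ.1 0) h) (by decide)
end

section
/- Let F and S be two orthogonal Fano planes with common point set V. For every block {a,b,c} of F there exists a unique block {x,y,z} of S disjoint from {a,b,c}; moreover, for every point v ∈ V there exist a unique block T1 of F and a unique block T2 of S such that {v}, T1, T2 partition V. -/
/-!
Part one is a count inside `S` alone: each point of `S` lies on three of its seven blocks and
each pair of points on exactly one, so by inclusion–exclusion a triple that is not a block of `S`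
meets exactly six blocks of `S` and misses exactly one. Blocks of `F` are such triples.

For part two, a pair `(T₁, T₂)` partitioning `V` together with `v` is determined by `T₁`, since
`T₂ = (insert v T₁)ᶜ`. Two distinct blocks `T₁ = {x, y, c}`, `T₁' = {u, w, c}` of `F` both working
for `v` (they cannot be disjoint, as `F` and `S` share no block) would force `T₂ = {u, w, a}` and
`T₂' = {x, y, a}` for the seventh point `a`, which orthogonality forbids. Hence the map sending each
block `b` of `F` to the point completing `b` and its disjoint `S`-block is injective, and as
`F` has seven blocks it hits every point.
-/

open Finset

section

variable {V : Type*} [DecidableEq V]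

namespace IsSteiner

variable {B : Finset (Finset V)}

theorem eq_of_mem_of_mem_s8 (h : IsSteiner B) {x y : V} (hxy : x ≠ y) {b b' : Finset V}
    (hb : b ∈ B) (hb' : b' ∈ B) (hxb : x ∈ b) (hyb : y ∈ b) (hxb' : x ∈ b') (hyb' : y ∈ b') :
    b = b' :=
  (h.2 x y hxy).unique ⟨hb, hxb, hyb⟩ ⟨hb', hxb', hyb'⟩

theorem disjoint_erase_of_ne (h : IsSteiner B) {b b' : Finset V} (hb : b ∈ B) (hb' : b' ∈ B)
    (hne : b ≠ b') {c : V} (hc : c ∈ b) (hc' : c ∈ b') : Disjoint (b.erase c) b' :=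
  disjoint_left.2 fun _ ha hab' =>
    hne (h.eq_of_mem_of_mem_s8 (ne_of_mem_erase ha) hb hb' (mem_of_mem_erase ha) hc hab' hc')

theorem card_filter_mem_and_mem (h : IsSteiner B) {x y : V} (hxy : x ≠ y) :
    #{b ∈ B | x ∈ b ∧ y ∈ b} = 1 :=
  card_eq_one_iff_existsUnique.2 <| by simpa only [mem_filter, and_assoc] using h.2 x y hxy

theorem two_mul_card_filter_mem_add_one [Fintype V] (h : IsSteiner B) (x : V) :
    2 * #{b ∈ B | x ∈ b} + 1 = Fintype.card V := by
  have hcover : univ.erase x = {b ∈ B | x ∈ b}.biUnion (·.erase x) := by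
    ext y
    simp only [mem_erase, mem_univ, and_true, mem_biUnion, mem_filter]
    constructor
    · intro hyx
      obtain ⟨b, ⟨hb, hxb, hyb⟩, -⟩ := h.2 x y hyx.symm
      exact ⟨b, ⟨hb, hxb⟩, hyx, hyb⟩
    · rintro ⟨b, -, hyx, -⟩
      exact hyx
  have hdisj : Set.PairwiseDisjoint (↑{b ∈ B | x ∈ b} : Set (Finset V)) (·.erase x) := by
    intro b hb b' hb' hne
    rw [mem_coe, mem_filter] at hb hb'
    exact (h.disjoint_erase_of_ne hb.1 hb'.1 hne hb.2 hb'.2).mono_right (erase_subset x b')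
  have hcard := congrArg card hcover
  have hpair : ∀ b ∈ {b ∈ B | x ∈ b}, #(b.erase x) = 2 := fun b hb => by
    rw [card_erase_of_mem (mem_filter.1 hb).2, h.1 b (mem_filter.1 hb).1]
  rw [card_biUnion hdisj, card_erase_of_mem (mem_univ x), card_univ, sum_congr rfl hpair,
    sum_const, smul_eq_mul] at hcard
  have := Fintype.card_pos_iff.2 ⟨x⟩
  omega

theorem six_mul_card [Fintype V] (h : IsSteiner B) :
    6 * #B = Fintype.card V * (Fintype.card V - 1) := by
  rcases isEmpty_or_nonempty V with hV | ⟨⟨x⟩⟩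
  · have hsum := sum_card (B := B) (n := 0) fun x => isEmptyElim x
    rw [sum_congr rfl h.1, sum_const, smul_eq_mul, mul_zero] at hsum
    rw [Fintype.card_eq_zero]
    omega
  · have hx := h.two_mul_card_filter_mem_add_one x
    have hsum := sum_card (B := B) fun y => by
      have := h.two_mul_card_filter_mem_add_one y
      exact (by omega : #{b ∈ B | y ∈ b} = #{b ∈ B | x ∈ b})
    rw [sum_congr rfl h.1, sum_const, smul_eq_mul, ← hx] at hsum
    rw [← hx, Nat.add_sub_cancel]
    linarith

theorem eq_of_mem_of_mem_of_mem (h : IsSteiner B) {x y z : V} {b : Finset V} (hb : b ∈ B)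
    (hxy : x ≠ y) (hxz : x ≠ z) (hyz : y ≠ z) (hx : x ∈ b) (hy : y ∈ b) (hz : z ∈ b) :
    b = {x, y, z} :=
  (eq_of_subset_of_card_le (by simp [insert_subset_iff, hx, hy, hz])
    (by rw [h.1 b hb, card_eq_three.2 ⟨x, y, z, hxy, hxz, hyz, rfl⟩])).symm

theorem card_filter_not_disjoint_add_three (h : IsSteiner B) {x y z : V} (hxy : x ≠ y)
    (hxz : x ≠ z) (hyz : y ≠ z) (hxyz : {x, y, z} ∉ B) :
    #{b ∈ B | ¬Disjoint {x, y, z} b} + 3 =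
      #{b ∈ B | x ∈ b} + #{b ∈ B | y ∈ b} + #{b ∈ B | z ∈ b} := by
  have hmeet : {b ∈ B | ¬Disjoint {x, y, z} b} =
      {b ∈ B | x ∈ b} ∪ {b ∈ B | y ∈ b} ∪ {b ∈ B | z ∈ b} := by
    ext b
    simp only [disjoint_insert_left, disjoint_singleton_left, not_and, Decidable.not_not,
      mem_filter, union_assoc, mem_union]
    tauto
  have hthird : ({b ∈ B | x ∈ b} ∪ {b ∈ B | y ∈ b}) ∩ {b ∈ B | z ∈ b} =
      {b ∈ B | x ∈ b ∧ z ∈ b} ∪ {b ∈ B | y ∈ b ∧ z ∈ b} := by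
    ext b
    simp only [mem_union, mem_inter, mem_filter]
    tauto
  have hdisj : Disjoint {b ∈ B | x ∈ b ∧ z ∈ b} {b ∈ B | y ∈ b ∧ z ∈ b} := by
    refine disjoint_filter.2 fun b hb hxz' hyz' => hxyz ?_
    rwa [← h.eq_of_mem_of_mem_of_mem hb hxy hxz hyz hxz'.1 hyz'.1 hyz'.2]
  have h1 := card_union_add_card_inter {b ∈ B | x ∈ b} {b ∈ B | y ∈ b}
  have h2 := card_union_add_card_inter ({b ∈ B | x ∈ b} ∪ {b ∈ B | y ∈ b}) {b ∈ B | z ∈ b}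
  rw [← filter_and, h.card_filter_mem_and_mem hxy] at h1
  rw [hthird, card_union_of_disjoint hdisj, h.card_filter_mem_and_mem hxz,
    h.card_filter_mem_and_mem hyz] at h2
  rw [hmeet]
  omega

end IsSteiner

namespace IsFano

variable [Fintype V] {B : Finset (Finset V)}

theorem card_filter_mem (h : IsFano B) (x : V) : #{b ∈ B | x ∈ b} = 3 := by
  have := h.2.two_mul_card_filter_mem_add_one x
  rw [h.1] at this
  omega

theorem card_eq_seven (h : IsFano B) : #B = 7 := by
  have := h.2.six_mul_card
  rw [h.1] at this
  omega

theorem existsUnique_disjoint (h : IsFano B) {b : Finset V} (hb : #b = 3) (hbB : b ∉ B) :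
    ∃! t, t ∈ B ∧ Disjoint b t := by
  obtain ⟨x, y, z, hxy, hxz, hyz, rfl⟩ := card_eq_three.1 hb
  have hmeet := h.2.card_filter_not_disjoint_add_three hxy hxz hyz hbB
  have hsplit :=
    card_filter_add_card_filter_not (s := B) (fun t => Disjoint ({x, y, z} : Finset V) t)
  rw [h.card_filter_mem, h.card_filter_mem, h.card_filter_mem] at hmeet
  rw [h.card_eq_seven] at hsplit
  have hdisj : #{t ∈ B | Disjoint {x, y, z} t} = 1 := by omega
  simpa only [mem_filter] using card_eq_one_iff_existsUnique.1 hdisj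

end IsFano

theorem insert_union_eq_univ_iff_eq_compl [Fintype V] {v : V} {A C : Finset V} :
    (v ∉ A ∧ v ∉ C ∧ Disjoint A C ∧ insert v (A ∪ C) = univ) ↔ (v ∉ A ∧ C = (insert v A)ᶜ) := by
  constructor
  · rintro ⟨hvA, hvC, hAC, hcover⟩
    refine ⟨hvA, ?_⟩
    ext w
    have := hcover ▸ mem_univ w
    simp only [mem_insert, mem_union, mem_compl, not_or] at this ⊢
    grind [disjoint_left]
  · rintro ⟨hvA, rfl⟩
    refine ⟨hvA, by simp,
      disjoint_compl_right.mono_right (compl_subset_compl.2 (subset_insert v A)), ?_⟩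
    ext w
    simp only [mem_insert, mem_union, mem_compl, mem_univ]
    tauto

theorem exists_notMem_compl_insert_eq [Fintype V] {b t : Finset V} (h : Disjoint b t)
    (hcard : #b + #t + 1 = Fintype.card V) : ∃ w ∉ b, (insert w b)ᶜ = t := by
  obtain ⟨w, hwt, hw⟩ := exists_eq_insert_iff.2
    ⟨subset_compl_iff_disjoint_left.2 h, by rw [card_compl]; omega⟩
  refine ⟨w, mem_compl.1 (hw ▸ mem_insert_self w t), ?_⟩
  rw [compl_insert, ← hw, erase_insert hwt]

namespace OrthogonalSTS

variable {F S : Finset (Finset V)}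

theorem eq_of_insert_mem (h : OrthogonalSTS F S) {P P' : Finset V} (hP : #P = 2) (hP' : #P' = 2)
    {c a : V} (hcP : insert c P ∈ F) (hcP' : insert c P' ∈ F) (haP : insert a P ∈ S)
    (haP' : insert a P' ∈ S) : P = P' := by
  obtain ⟨x, y, -, rfl⟩ := card_eq_two.1 hP
  obtain ⟨u, w, -, rfl⟩ := card_eq_two.1 hP'
  by_contra hne
  rw [insert_comm, pair_comm c] at hcP hcP'
  rw [insert_comm, pair_comm a] at haP haP'
  exact h.2 x y c u w a a hne hcP hcP' haP haP' rfl

theorem eq_of_compl_insert_mem [Fintype V] (h : OrthogonalSTS F S) (hF : IsSteiner F)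
    (hS : ∀ t ∈ S, #t = 3) {v : V} {T T' : Finset V} (hT : T ∈ F) (hT' : T' ∈ F)
    (hvT : v ∉ T) (hvT' : v ∉ T') (hU : (insert v T)ᶜ ∈ S) (hU' : (insert v T')ᶜ ∈ S) :
    T = T' := by
  by_contra hne
  obtain ⟨c, hcT, hcT'⟩ : ∃ c, c ∈ T ∧ c ∈ T' := by
    by_contra! hTT'
    have hsub : T' ⊆ (insert v T)ᶜ := subset_compl_iff_disjoint_right.2
      (disjoint_insert_right.2 ⟨hvT', (disjoint_left.2 hTT').symm⟩)
    have := eq_of_subset_of_card_le hsub (by rw [hS _ hU, hF.1 _ hT'])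
    exact h.1 T' ⟨hT', this ▸ hU⟩
  have hPU' : T.erase c ⊆ (insert v T')ᶜ := subset_compl_iff_disjoint_right.2
    (disjoint_insert_right.2 ⟨fun hv => hvT (mem_of_mem_erase hv),
      hF.disjoint_erase_of_ne hT hT' hne hcT hcT'⟩)
  have hP'U : T'.erase c ⊆ (insert v T)ᶜ := subset_compl_iff_disjoint_right.2
    (disjoint_insert_right.2 ⟨fun hv => hvT' (mem_of_mem_erase hv),
      hF.disjoint_erase_of_ne hT' hT (Ne.symm hne) hcT' hcT⟩)
  have hcardP : #(T.erase c) = 2 := by rw [card_erase_of_mem hcT, hF.1 _ hT]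
  have hcardP' : #(T'.erase c) = 2 := by rw [card_erase_of_mem hcT', hF.1 _ hT']
  obtain ⟨a, haP, hPa⟩ := exists_eq_insert_iff.2 ⟨hPU', by rw [hcardP, hS _ hU']⟩
  have haT' : a ∉ insert v T' := mem_compl.1 (hPa ▸ mem_insert_self a _)
  have haU : a ∈ (insert v T)ᶜ := by
    rw [mem_insert, not_or] at haT'
    rw [mem_compl, mem_insert, not_or]
    exact ⟨haT'.1, fun haT => haP (mem_erase.2 ⟨fun hac => haT'.2 (hac ▸ hcT'), haT⟩)⟩
  have hP'a : insert a (T'.erase c) = (insert v T)ᶜ := eq_of_subset_of_card_le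
    (insert_subset haU hP'U) (by
      rw [hS _ hU, card_insert_of_notMem fun ha => haT' (mem_insert_of_mem (mem_of_mem_erase ha)),
        hcardP'])
  have hPP' := h.eq_of_insert_mem hcardP hcardP' (by rwa [insert_erase hcT])
    (by rwa [insert_erase hcT']) (hPa ▸ hU') (hP'a ▸ hU)
  exact hne (by rw [← insert_erase hcT, hPP', insert_erase hcT'])

theorem existsUnique_disjoint [Fintype V] (h : OrthogonalSTS F S) (hF : ∀ b ∈ F, #b = 3)
    (hS : IsFano S) {b : Finset V} (hb : b ∈ F) : ∃! t, t ∈ S ∧ Disjoint b t :=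
  hS.existsUnique_disjoint (hF b hb) fun hbS => h.1 b ⟨hb, hbS⟩

theorem exists_compl_insert_mem [Fintype V] (h : OrthogonalSTS F S) (hF : IsFano F)
    (hS : IsFano S) (v : V) : ∃ T ∈ F, v ∉ T ∧ (insert v T)ᶜ ∈ S := by
  have hw : ∀ b ∈ F, ∃ w ∉ b, (insert w b)ᶜ ∈ S := fun b hb => by
    obtain ⟨t, ⟨ht, hbt⟩, -⟩ := h.existsUnique_disjoint hF.2.1 hS hb
    obtain ⟨w, hwb, hw⟩ := exists_notMem_compl_insert_eq hbt
      (by rw [hF.2.1 b hb, hS.2.1 t ht, hF.1])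
    exact ⟨w, hwb, hw ▸ ht⟩
  have : Nonempty V := ⟨v⟩
  choose! w hwb hwS using hw
  have hinj : Set.InjOn w F := fun T hT T' hT' hTT' =>
    h.eq_of_compl_insert_mem hF.2 hS.2.1 hT hT' (hwb T hT) (hTT' ▸ hwb T' hT') (hwS T hT)
      (hTT' ▸ hwS T' hT')
  obtain ⟨T, hT, rfl⟩ := surjOn_of_injOn_of_card_le w (fun _ _ => mem_coe.2 (mem_univ _)) hinj
    (by rw [card_univ, hF.1, hF.card_eq_seven]) (mem_coe.2 (mem_univ v))
  exact ⟨T, hT, hwb T hT, hwS T hT⟩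

end OrthogonalSTS

end

/-- For orthogonal Fano planes `F`, `S`: every block of `F` is disjoint from a
unique block of `S`, and every point `v` together with a unique block of `F` and
a unique block of `S` partitions the point set. -/
theorem orthogonal_disjoint_block_and_partition {V : Type*} [DecidableEq V] [Fintype V]
    (F S : Finset (Finset V)) (hF : IsFano F) (hS : IsFano S) (horth : OrthogonalSTS F S) :
    (∀ b ∈ F, ∃! t : Finset V, t ∈ S ∧ Disjoint b t) ∧
    (∀ v : V, ∃! p : Finset V × Finset V, p.1 ∈ F ∧ p.2 ∈ S ∧
      v ∉ p.1 ∧ v ∉ p.2 ∧ Disjoint p.1 p.2 ∧ insert v (p.1 ∪ p.2) = Finset.univ) := by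
  refine ⟨fun b hb => horth.existsUnique_disjoint hF.2.1 hS hb, fun v => ?_⟩
  simp only [insert_union_eq_univ_iff_eq_compl]
  obtain ⟨T, hT, hvT, hU⟩ := horth.exists_compl_insert_mem hF hS v
  refine ⟨(T, (insert v T)ᶜ), ⟨hT, hU, hvT, rfl⟩, ?_⟩
  rintro ⟨T', U'⟩ ⟨hT', hU', hvT', hU'eq : U' = (insert v T')ᶜ⟩
  subst hU'eq
  obtain rfl := horth.eq_of_compl_insert_mem hF.2 hS.2.1 hT' hT hvT' hvT hU' hU
  rfl
end

section
/- Every Fano plane admits exactly eight distinct orientations. -/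
/-- An orientation on a Fano plane `B`: an antisymmetric relation that cyclically
orients every block, and such that for every point `x` the three out-neighbors of
`x` on the three blocks through `x` themselves form a block. -/
def IsOrientation {V : Type*} [DecidableEq V] (B : Finset (Finset V)) (r : V → V → Prop) : Prop :=
  (∀ x y : V, r x y → ¬ r y x) ∧
  (∀ x1 x2 x3 : V, ({x1, x2, x3} : Finset V) ∈ B →
    (r x1 x2 ∧ r x2 x3 ∧ r x3 x1) ∨ (r x1 x3 ∧ r x3 x2 ∧ r x2 x1)) ∧
  (∀ x y1 z1 y2 z2 y3 z3 : V,
    ({x, y1, z1} : Finset V) ∈ B → ({x, y2, z2} : Finset V) ∈ B → ({x, y3, z3} : Finset V) ∈ B →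
    ({x, y1, z1} : Finset V) ≠ ({x, y2, z2} : Finset V) →
    ({x, y1, z1} : Finset V) ≠ ({x, y3, z3} : Finset V) →
    ({x, y2, z2} : Finset V) ≠ ({x, y3, z3} : Finset V) →
    r x y1 → r x y2 → r x y3 → ({y1, y2, y3} : Finset V) ∈ B)

/-!
Write `x ∘ y` for the third point of the block through `x ≠ y`, and `x ∘ x = x`; this operation
is commutative and satisfies `x ∘ (x ∘ y) = y`. Fix distinct points `a, b`, put `c = a ∘ b` and
pick `d ∉ {a, b, c}`. These laws show that `a, b, d, c, b ∘ d, c ∘ d, a ∘ d` are distinct, hence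
all seven points, and exhausting them forces the three blocks not built directly. So every Fano
plane is isomorphic to the cyclic plane with blocks `{i, i + 1, i + 3}` mod 7, and orientations
transport along the isomorphism.

An antisymmetric relation orienting every block cyclically is determined by a sign for each of
the seven blocks. In a Fano plane `y ↦ x ∘ y` exchanges the out- and in-neighbours of `x`, so `x`
has exactly three out-neighbours, one on each block through `x`, and the last orientation axiom
says that they form a block. Among the `2 ^ 7` sign vectors of the cyclic plane, exactly eight
pass this test.
-/

open Finset Function

section Cyclic

variable {V : Type*} {r : V → V → Prop} {a b c : V}

def CyclicallyOriented (r : V → V → Prop) (a b c : V) : Prop :=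
  (r a b ∧ r b c ∧ r c a) ∨ (r a c ∧ r c b ∧ r b a)

theorem CyclicallyOriented.rotate (h : CyclicallyOriented r a b c) :
    CyclicallyOriented r b c a := by
  unfold CyclicallyOriented at *; tauto

theorem CyclicallyOriented.swap (h : CyclicallyOriented r a b c) :
    CyclicallyOriented r a c b := by
  unfold CyclicallyOriented at *; tauto

theorem CyclicallyOriented.rel_iff_not_rel (hanti : ∀ x y, r x y → ¬ r y x)
    (h : CyclicallyOriented r a b c) : r a b ↔ ¬ r a c := by
  unfold CyclicallyOriented at h
  have := hanti a b; have := hanti a c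
  tauto

end Cyclic

section

variable {V : Type*} [DecidableEq V] {B : Finset (Finset V)}

theorem CyclicallyOriented.rel_iff_rel {r r' : V → V → Prop}
    (hanti : ∀ x y, r x y → ¬ r y x) (hanti' : ∀ x y, r' x y → ¬ r' y x) {a b c : V}
    (h : CyclicallyOriented r a b c) (h' : CyclicallyOriented r' a b c) (hab : r a b ↔ r' a b)
    {x y : V} (hx : x ∈ ({a, b, c} : Finset V)) (hy : y ∈ ({a, b, c} : Finset V)) :
    r x y ↔ r' x y := by
  simp only [mem_insert, mem_singleton] at hx hy
  unfold CyclicallyOriented at h h'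
  rcases hx with rfl | rfl | rfl <;> rcases hy with rfl | rfl | rfl <;> grind

theorem Finset.exists_eq_triple_of_card_eq_three {s : Finset V} (hs : #s = 3)
    {x y : V} (hx : x ∈ s) (hy : y ∈ s) (hxy : x ≠ y) : ∃ z, s = {x, y, z} := by
  obtain ⟨z, hz⟩ : (s \ {x, y}).Nonempty := by
    rw [← card_pos, card_sdiff_of_subset (by simp [insert_subset_iff, hx, hy]), hs,
      card_pair hxy]
    norm_num
  simp only [mem_sdiff, mem_insert, mem_singleton, not_or] at hz
  refine ⟨z, (eq_of_subset_of_card_le ?_ ?_).symm⟩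
  · simp [insert_subset_iff, hx, hy, hz.1]
  · rw [hs, card_triple_eq_three_iff.mpr ⟨hxy, Ne.symm hz.2.1, Ne.symm hz.2.2⟩]

open Classical in
noncomputable def thirdPoint (B : Finset (Finset V)) (x y : V) : V :=
  if h : ∃ z, {x, y, z} ∈ B then h.choose else x

namespace IsSteiner

theorem eq_of_mem_of_mem_s11 (hB : IsSteiner B) {s t : Finset V} (hs : s ∈ B) (ht : t ∈ B) {x y : V}
    (hxy : x ≠ y) (hxs : x ∈ s) (hys : y ∈ s) (hxt : x ∈ t) (hyt : y ∈ t) : s = t :=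
  (hB.2 x y hxy).unique ⟨hs, hxs, hys⟩ ⟨ht, hxt, hyt⟩

theorem ne_of_mem (hB : IsSteiner B) {x y z : V} (h : {x, y, z} ∈ B) :
    x ≠ y ∧ x ≠ z ∧ y ≠ z :=
  card_triple_eq_three_iff.mp (hB.1 _ h)

theorem mem_thirdPoint (hB : IsSteiner B) {x y : V} (hxy : x ≠ y) :
    {x, y, thirdPoint B x y} ∈ B := by
  have hex : ∃ z, {x, y, z} ∈ B := by
    obtain ⟨s, ⟨hs, hxs, hys⟩, -⟩ := hB.2 x y hxy
    obtain ⟨z, rfl⟩ := exists_eq_triple_of_card_eq_three (hB.1 s hs) hxs hys hxy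
    exact ⟨z, hs⟩
  rw [thirdPoint, dif_pos hex]
  exact hex.choose_spec

theorem thirdPoint_eq_of_mem (hB : IsSteiner B) {x y z : V} (h : {x, y, z} ∈ B) :
    thirdPoint B x y = z := by
  obtain ⟨hxy, hxz, hyz⟩ := hB.ne_of_mem h
  have heq := hB.eq_of_mem_of_mem_s11 h (hB.mem_thirdPoint hxy) hxy (by simp) (by simp) (by simp)
    (by simp)
  have hz : z ∈ ({x, y, thirdPoint B x y} : Finset V) := heq ▸ by simp
  simp only [mem_insert, mem_singleton] at hz
  grind

theorem mem_iff_thirdPoint_eq (hB : IsSteiner B) {x y z : V} (hxy : x ≠ y) :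
    {x, y, z} ∈ B ↔ thirdPoint B x y = z :=
  ⟨hB.thirdPoint_eq_of_mem, fun h => h ▸ hB.mem_thirdPoint hxy⟩

theorem thirdPoint_ne_left (hB : IsSteiner B) {x y : V} (hxy : x ≠ y) : thirdPoint B x y ≠ x :=
  (hB.ne_of_mem (hB.mem_thirdPoint hxy)).2.1.symm

theorem thirdPoint_self (hB : IsSteiner B) (x : V) : thirdPoint B x x = x := by
  rw [thirdPoint, dif_neg]
  rintro ⟨z, hz⟩
  exact (hB.ne_of_mem hz).1 rfl

theorem thirdPoint_comm (hB : IsSteiner B) (x y : V) : thirdPoint B x y = thirdPoint B y x := by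
  rcases eq_or_ne x y with rfl | hxy
  · rfl
  · exact (hB.thirdPoint_eq_of_mem (by rw [insert_comm]; exact hB.mem_thirdPoint hxy)).symm

theorem thirdPoint_thirdPoint (hB : IsSteiner B) (x y : V) :
    thirdPoint B x (thirdPoint B x y) = y := by
  rcases eq_or_ne x y with rfl | hxy
  · rw [hB.thirdPoint_self, hB.thirdPoint_self]
  · refine hB.thirdPoint_eq_of_mem ?_
    rw [pair_comm]
    exact hB.mem_thirdPoint hxy

theorem eq_of_subset (hB : IsSteiner B) {B' : Finset (Finset V)} (hsub : B' ⊆ B)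
    (hcover : ∀ x y, ∃ s ∈ B', x ∈ s ∧ y ∈ s) : B' = B := by
  refine hsub.antisymm fun s hs => ?_
  obtain ⟨x, y, z, hxy, -, -, rfl⟩ := card_eq_three.mp (hB.1 s hs)
  obtain ⟨s', hs', hx, hy⟩ := hcover x y
  rwa [hB.eq_of_mem_of_mem_s11 hs (hsub hs') hxy (by simp) (by simp) hx hy]

variable {r : V → V → Prop}

theorem rel_iff_not_rel_thirdPoint (hB : IsSteiner B) (hanti : ∀ x y, r x y → ¬ r y x)
    (hcyc : ∀ x1 x2 x3, {x1, x2, x3} ∈ B → CyclicallyOriented r x1 x2 x3) {x y : V}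
    (hxy : x ≠ y) : r x y ↔ ¬ r x (thirdPoint B x y) :=
  (hcyc _ _ _ (hB.mem_thirdPoint hxy)).rel_iff_not_rel hanti

theorem isOrientation_of_forall_exists_block (hB : IsSteiner B)
    (hanti : ∀ x y, r x y → ¬ r y x)
    (hcyc : ∀ x1 x2 x3, {x1, x2, x3} ∈ B → CyclicallyOriented r x1 x2 x3)
    (hout : ∀ x, ∃ s ∈ B, ∀ y, r x y ↔ y ∈ s) : IsOrientation B r := by
  refine ⟨hanti, hcyc, fun x y1 z1 y2 z2 y3 z3 h1 h2 h3 h12 h13 h23 hr1 hr2 hr3 => ?_⟩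
  obtain ⟨s, hs, hrs⟩ := hout x
  have hx : ∀ {y}, r x y → x ≠ y := fun hr hxy => hanti _ _ hr (hxy ▸ hr)
  have hne : ∀ {y z y' z'}, r x y → {x, y, z} ∈ B → {x, y', z'} ∈ B →
      ({x, y, z} : Finset V) ≠ {x, y', z'} → y ≠ y' := by
    rintro y z y' z' hr h h' hne rfl
    exact hne (hB.eq_of_mem_of_mem_s11 h h' (hx hr) (by simp) (by simp) (by simp) (by simp))
  have hsub : ({y1, y2, y3} : Finset V) ⊆ s := by
    simp [insert_subset_iff, ← hrs, hr1, hr2, hr3]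
  have hcard : #s ≤ #({y1, y2, y3} : Finset V) := by
    rw [hB.1 s hs, card_triple_eq_three_iff.mpr
      ⟨hne hr1 h1 h2 h12, hne hr1 h1 h3 h13, hne hr2 h2 h3 h23⟩]
  rwa [eq_of_subset_of_card_le hsub hcard]

end IsSteiner

theorem IsFano.card_filter_rel_eq_three [Fintype V] {r : V → V → Prop} [DecidableRel r]
    (hB : IsFano B) (hanti : ∀ x y, r x y → ¬ r y x)
    (hcyc : ∀ x1 x2 x3, {x1, x2, x3} ∈ B → CyclicallyOriented r x1 x2 x3) (x : V) :
    #(univ.filter (r x)) = 3 := by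
  obtain ⟨hV, hS⟩ := hB
  set t := thirdPoint B x
  set N := univ.filter (r x)
  have hx : ∀ {y}, r x y → y ≠ x := fun hr hxy => hanti _ _ hr (hxy ▸ hr)
  have hrt : ∀ {y}, y ≠ x → (r x y ↔ ¬ r x (t y)) := fun hy =>
    hS.rel_iff_not_rel_thirdPoint hanti hcyc (Ne.symm hy)
  have hdisj : Disjoint N (N.image t) := by
    simp only [N, disjoint_left, mem_filter, mem_univ, true_and, mem_image, not_exists, not_and]
    intro y hy z hz rfl
    exact (hrt (hx hz)).mp hz hy
  have hunion : insert x (N ∪ N.image t) = univ := by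
    refine eq_univ_of_forall fun y => ?_
    rcases eq_or_ne y x with rfl | hy
    · exact mem_insert_self _ _
    · by_cases hr : r x y
      · simp [N, hr]
      · refine mem_insert_of_mem (mem_union_right _ (mem_image.mpr ⟨t y, ?_, ?_⟩))
        · simpa [N, hrt hy] using hr
        · exact hS.thirdPoint_thirdPoint x y
  have hxN : x ∉ N ∪ N.image t := by
    simp only [N, mem_union, mem_filter, mem_univ, true_and, mem_image, not_or, not_exists,
      not_and]
    exact ⟨fun h => hanti x x h h, fun y hy => hS.thirdPoint_ne_left (hx hy).symm⟩
  have hinj : Injective t := Involutive.injective (hS.thirdPoint_thirdPoint x)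
  have := congrArg card hunion
  rw [card_insert_of_notMem hxN, card_union_of_disjoint hdisj, card_image_of_injective _ hinj,
    card_univ, hV] at this
  omega

theorem IsFano.exists_block_of_isOrientation [Fintype V] {r : V → V → Prop} (hB : IsFano B)
    (hO : IsOrientation B r) (x : V) : ∃ s ∈ B, ∀ y, r x y ↔ y ∈ s := by
  classical
  obtain ⟨hanti, hcyc, hblock⟩ := hO
  obtain ⟨y1, y2, y3, h12, h13, h23, hN⟩ :=
    card_eq_three.mp (hB.card_filter_rel_eq_three hanti hcyc x)
  set t := thirdPoint B x
  have hr : ∀ {y}, r x y ↔ y ∈ ({y1, y2, y3} : Finset V) := by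
    intro y; rw [← hN]; simp
  have hx : ∀ {y}, r x y → y ≠ x := fun hr hxy => hanti _ _ hr (hxy ▸ hr)
  have hmem : ∀ {y}, r x y → {x, y, t y} ∈ B := fun hy => hB.2.mem_thirdPoint (hx hy).symm
  have hne : ∀ {y y'}, r x y → r x y' → y ≠ y' →
      ({x, y, t y} : Finset V) ≠ {x, y', t y'} := by
    intro y y' hy hy' hyy' heq
    have : y' ∈ ({x, y, t y} : Finset V) := heq ▸ by simp
    simp only [mem_insert, mem_singleton] at this
    rcases this with h | h | h
    · exact hx hy' h
    · exact hyy' h.symm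
    · subst h
      exact (hB.2.rel_iff_not_rel_thirdPoint hanti hcyc (hx hy).symm).mp hy hy'
  have h1 : r x y1 := hr.mpr (by simp)
  have h2 : r x y2 := hr.mpr (by simp)
  have h3 : r x y3 := hr.mpr (by simp)
  exact ⟨_, hblock x y1 (t y1) y2 (t y2) y3 (t y3) (hmem h1) (hmem h2) (hmem h3)
    (hne h1 h2 h12) (hne h1 h3 h13) (hne h2 h3 h23) h1 h2 h3, fun y => hr⟩

section Transport

variable {W : Type*} [DecidableEq W]

theorem IsOrientation.comap {f : W → V} (hf : Injective f) {B : Finset (Finset W)}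
    {r : V → V → Prop} (h : IsOrientation (B.image (image f)) r) :
    IsOrientation B fun a b => r (f a) (f b) := by
  have hmem : ∀ {a b c : W}, {f a, f b, f c} ∈ B.image (image f) ↔ {a, b, c} ∈ B := by
    intro a b c
    rw [← (image_injective hf).mem_finset_image]
    simp [image_insert]
  have hne : ∀ {a b c a' b' c' : W}, ({a, b, c} : Finset W) ≠ {a', b', c'} →
      ({f a, f b, f c} : Finset V) ≠ {f a', f b', f c'} := by
    intro a b c a' b' c' hne heq
    exact hne (image_injective hf (by simpa [image_insert] using heq))
  obtain ⟨hanti, hcyc, hblock⟩ := h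
  exact ⟨fun a b => hanti (f a) (f b), fun a b c habc => hcyc _ _ _ (hmem.mpr habc),
    fun x y1 z1 y2 z2 y3 z3 h1 h2 h3 h12 h13 h23 hr1 hr2 hr3 =>
      hmem.mp (hblock _ _ _ _ _ _ _ (hmem.mpr h1) (hmem.mpr h2) (hmem.mpr h3) (hne h12)
        (hne h13) (hne h23) hr1 hr2 hr3)⟩

theorem ncard_isOrientation_image_equiv (e : W ≃ V) (B : Finset (Finset W)) :
    {r | IsOrientation (B.image (image e)) r}.ncard = {r | IsOrientation B r}.ncard := by
  refine Set.ncard_congr (fun r _ a b => r (e a) (e b)) (fun r hr => hr.comap e.injective)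
    (fun r r' _ _ h => ?_) (fun r' hr' => ⟨fun x y => r' (e.symm x) (e.symm y), ?_, by simp⟩)
  · ext x y
    simpa using congrFun₂ h (e.symm x) (e.symm y)
  · have hB : (B.image (image e)).image (image e.symm) = B := by
      have hid : image e.symm ∘ image e = id := funext fun s => by simp [Finset.image_image]
      rw [Finset.image_image, hid, image_id]
    exact IsOrientation.comap e.symm.injective (hB.symm ▸ hr')

end Transport

def fanoLine (i : Fin 7) : Finset (Fin 7) := {i, i + 1, i + 3}

def fanoPlane : Finset (Finset (Fin 7)) := univ.image fanoLine

theorem exists_fanoLine : ∀ x y : Fin 7, ∃ i, x ∈ fanoLine i ∧ y ∈ fanoLine i := by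
  decide

theorem fanoLine_card : ∀ i, #(fanoLine i) = 3 := by decide

theorem fanoLine_unique : ∀ i j x y : Fin 7, x ≠ y → x ∈ fanoLine i → y ∈ fanoLine i →
    x ∈ fanoLine j → y ∈ fanoLine j → i = j := by
  decide

theorem isFano_fanoPlane : IsFano fanoPlane := by
  refine ⟨Fintype.card_fin 7, ?_, fun x y hxy => ?_⟩
  · simp [fanoPlane, fanoLine_card]
  · obtain ⟨i, hx, hy⟩ := exists_fanoLine x y
    refine ⟨fanoLine i, ⟨mem_image_of_mem _ (mem_univ i), hx, hy⟩, ?_⟩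
    rintro _ ⟨hs, hxs, hys⟩
    obtain ⟨j, -, rfl⟩ := mem_image.mp hs
    rw [fanoLine_unique j i x y hxy hxs hys hx hy]

theorem exists_eq_of_mem_fanoPlane : ∀ x y z : Fin 7, {x, y, z} ∈ fanoPlane → ∃ i,
    (x, y, z) = (i, i + 1, i + 3) ∨ (y, z, x) = (i, i + 1, i + 3) ∨
    (z, x, y) = (i, i + 1, i + 3) ∨ (x, z, y) = (i, i + 1, i + 3) ∨
    (z, y, x) = (i, i + 1, i + 3) ∨ (y, x, z) = (i, i + 1, i + 3) := by
  decide +kernel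

theorem IsFano.exists_equiv_fanoPlane [Fintype V] (hB : IsFano B) :
    ∃ e : Fin 7 ≃ V, B = fanoPlane.image (image e) := by
  obtain ⟨hV, hS⟩ := hB
  set t := thirdPoint B
  have ht_inv : ∀ x y, t x (t x y) = y := hS.thirdPoint_thirdPoint
  have ht_comm : ∀ x y, t x y = t y x := hS.thirdPoint_comm
  have ht_ne : ∀ x y, x ≠ y → t x y ≠ x := fun _ _ => hS.thirdPoint_ne_left
  obtain ⟨a, b, hab⟩ : ∃ a b : V, a ≠ b := Fintype.exists_pair_of_one_lt_card (by omega)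
  obtain ⟨d, -, hd⟩ := exists_mem_notMem_of_card_lt_card (s := {a, b, t a b}) (t := univ)
    (card_le_three.trans_lt (by simp [hV]))
  simp only [mem_insert, mem_singleton, not_or] at hd
  set f : Fin 7 → V := ![a, b, d, t a b, t b d, t (t a b) d, t a d]
  have hinj : Injective f := by
    intro i j h
    fin_cases i <;> fin_cases j <;> simp [f] at h ⊢ <;> grind
  have hbij : Bijective f :=
    (Fintype.bijective_iff_injective_and_card f).mpr ⟨hinj, by simp [hV]⟩
  have hall : ∀ w,
      w = a ∨ w = b ∨ w = d ∨ w = t a b ∨ w = t b d ∨ w = t (t a b) d ∨ w = t a d := by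
    intro w
    obtain ⟨k, rfl⟩ := hbij.2 w
    fin_cases k <;> simp [f]
  -- The images of `fanoLine 3`, `fanoLine 4`, `fanoLine 5`: of the seven candidates for each
  -- third point, the laws above exclude all but one.
  have h3 : t (t a b) (t b d) = t a d := by
    rcases hall (t (t a b) (t b d)) with h | h | h | h | h | h | h <;> grind
  have h4 : t (t b d) (t (t a b) d) = a := by
    rcases hall (t (t b d) (t (t a b) d)) with h | h | h | h | h | h | h <;> grind
  have h5 : t (t (t a b) d) (t a d) = b := by
    rcases hall (t (t (t a b) d) (t a d)) with h | h | h | h | h | h | h <;> grind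
  have hline : ∀ i, image f (fanoLine i) ∈ B := by
    intro i
    fin_cases i <;> simp [f, fanoLine, image_insert] <;>
      rw [hS.mem_iff_thirdPoint_eq (by grind)] <;> grind
  let e := Equiv.ofBijective f hbij
  refine ⟨e, (hS.eq_of_subset ?_ fun x y => ?_).symm⟩
  · simp only [fanoPlane, image_image, subset_iff, mem_image, mem_univ, true_and]
    rintro _ ⟨i, rfl⟩
    exact hline i
  · obtain ⟨i, hx, hy⟩ := exists_fanoLine (e.symm x) (e.symm y)
    refine ⟨image e (fanoLine i), mem_image_of_mem _ (mem_image_of_mem _ (mem_univ i)), ?_, ?_⟩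
    · simpa using mem_image_of_mem e hx
    · simpa using mem_image_of_mem e hy

def fanoArc (i x y : Fin 7) : Prop :=
  (x = i ∧ y = i + 1) ∨ (x = i + 1 ∧ y = i + 3) ∨ (x = i + 3 ∧ y = i)

instance (i x y : Fin 7) : Decidable (fanoArc i x y) := by
  unfold fanoArc; infer_instance

theorem fanoArc_unique : ∀ i j x y : Fin 7, (fanoArc i x y ∨ fanoArc i y x) →
    (fanoArc j x y ∨ fanoArc j y x) → i = j := by
  decide +kernel

theorem fanoArc_asymm : ∀ i x y : Fin 7, fanoArc i x y → ¬ fanoArc i y x := by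
  decide

def fanoRel (d : Fin 7 → Bool) (x y : Fin 7) : Prop :=
  ∃ i, if d i then fanoArc i x y else fanoArc i y x

instance (d : Fin 7 → Bool) (x y : Fin 7) : Decidable (fanoRel d x y) := by
  unfold fanoRel; infer_instance

theorem fanoRel_asymm (d : Fin 7 → Bool) (x y : Fin 7) (h : fanoRel d x y) :
    ¬ fanoRel d y x := by
  obtain ⟨i, hi⟩ := h
  rintro ⟨j, hj⟩
  obtain rfl :=
    fanoArc_unique i j x y (by split_ifs at hi <;> tauto) (by split_ifs at hj <;> tauto)
  split_ifs at hi hj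
  exacts [fanoArc_asymm i x y hi hj, fanoArc_asymm i y x hi hj]

theorem fanoRel_add_one_iff :
    ∀ (d : Fin 7 → Bool) (i : Fin 7), fanoRel d i (i + 1) ↔ d i := by
  decide +kernel

theorem fanoRel_cyclicallyOriented : ∀ (d : Fin 7 → Bool) (i : Fin 7),
    CyclicallyOriented (fanoRel d) i (i + 1) (i + 3) := by
  unfold CyclicallyOriented; decide +kernel

theorem card_fanoRel_forall_exists_block :
    #{d : Fin 7 → Bool | ∀ x, ∃ s ∈ fanoPlane, ∀ y, fanoRel d x y ↔ y ∈ s} = 8 := by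
  decide +kernel

theorem fanoRel_cyclicallyOriented_of_mem (d : Fin 7 → Bool) {x y z : Fin 7}
    (h : {x, y, z} ∈ fanoPlane) : CyclicallyOriented (fanoRel d) x y z := by
  obtain ⟨i, h⟩ := exists_eq_of_mem_fanoPlane x y z h
  have hi := fanoRel_cyclicallyOriented d i
  rcases h with h | h | h | h | h | h <;> simp only [Prod.mk.injEq] at h <;>
    obtain ⟨rfl, rfl, rfl⟩ := h
  exacts [hi, hi.rotate.rotate, hi.rotate, hi.swap, hi.swap.rotate, hi.rotate.swap]

theorem IsOrientation.eq_fanoRel {r : Fin 7 → Fin 7 → Prop} (hO : IsOrientation fanoPlane r)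
    {d : Fin 7 → Bool} (hd : ∀ i, r i (i + 1) ↔ d i) : r = fanoRel d := by
  ext x y
  obtain ⟨i, hx, hy⟩ := exists_fanoLine x y
  exact CyclicallyOriented.rel_iff_rel hO.1 (fanoRel_asymm _)
    (hO.2.1 _ _ _ (mem_image_of_mem _ (mem_univ i))) (fanoRel_cyclicallyOriented _ i)
    (by rw [fanoRel_add_one_iff, hd]) hx hy

theorem ncard_isOrientation_fanoPlane : {r | IsOrientation fanoPlane r}.ncard = 8 := by
  have hset : {r | IsOrientation fanoPlane r} =
      fanoRel '' {d | ∀ x, ∃ s ∈ fanoPlane, ∀ y, fanoRel d x y ↔ y ∈ s} := by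
    ext r
    constructor
    · intro hO
      classical
      have hr := hO.eq_fanoRel (d := fun i => decide (r i (i + 1))) (by simp)
      refine ⟨_, fun x => ?_, hr.symm⟩
      rw [← hr]
      exact isFano_fanoPlane.exists_block_of_isOrientation hO x
    · rintro ⟨d, hd, rfl⟩
      exact isFano_fanoPlane.2.isOrientation_of_forall_exists_block (fanoRel_asymm d)
        (fun _ _ _ => fanoRel_cyclicallyOriented_of_mem d) hd
  have hinj : Injective fanoRel := fun d d' h => funext fun i => by
    simpa [fanoRel_add_one_iff] using congrFun₂ h i (i + 1)
  rw [hset, Set.ncard_image_of_injective _ hinj, ← card_fanoRel_forall_exists_block,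
    ← Set.ncard_coe_finset]
  simp

end

/-- Every Fano plane admits exactly eight distinct orientations. -/
theorem eight_orientations {V : Type*} [DecidableEq V] [Fintype V]
    (B : Finset (Finset V)) (hB : IsFano B) :
    {r : V → V → Prop | IsOrientation B r}.ncard = 8 := by
  obtain ⟨e, rfl⟩ := hB.exists_equiv_fanoPlane
  rw [ncard_isOrientation_image_equiv, ncard_isOrientation_fanoPlane]
end

section
/- If →1 and →2 are any two orientations on a Fano plane F, then there exists an automorphism σ of F with σ(→1) = →2; consequently the automorphism group of an oriented Fano plane is independent (up to isomorphism) of the chosen orientation. -/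
/-- The group of all permutations preserving a binary relation. -/
def relAutGroup {V : Type*} (r : V → V → Prop) : Subgroup (Equiv.Perm V) where
  carrier := {σ | ∀ x y : V, r (σ x) (σ y) ↔ r x y}
  one_mem' := by intro x y; rfl
  mul_mem' := by
    intro σ τ hσ hτ x y
    exact (hσ (τ x) (τ y)).trans (hτ x y)
  inv_mem' := by
    intro σ hσ x y
    have := hσ (σ⁻¹ x) (σ⁻¹ y)
    simpa using this.symm

section FanoAux
variable {V : Type*} [DecidableEq V] [Fintype V]

def fanoCanB : Finset (Finset (Fin 7)) :=
  {{0,1,3},{1,2,4},{2,3,5},{3,4,6},{4,5,0},{5,6,1},{6,0,2}}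

def fanoCanR (i j : Fin 7) : Prop := j - i = 1 ∨ j - i = 2 ∨ j - i = 4

instance (i j : Fin 7) : Decidable (fanoCanR i j) := by unfold fanoCanR; infer_instance

lemma fano_uniq {B : Finset (Finset V)} (hB : IsFano B) {b b' : Finset V}
    (hb : b ∈ B) (hb' : b' ∈ B) {x y : V} (hxy : x ≠ y)
    (hxb : x ∈ b) (hyb : y ∈ b) (hxb' : x ∈ b') (hyb' : y ∈ b') : b = b' := by
  obtain ⟨c, -, hu⟩ := hB.2.2 x y hxy
  rw [hu b ⟨hb, hxb, hyb⟩, hu b' ⟨hb', hxb', hyb'⟩]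

lemma fano_exists_block {B : Finset (Finset V)} (hB : IsFano B) {x y : V} (hxy : x ≠ y) :
    ∃ b, b ∈ B ∧ x ∈ b ∧ y ∈ b := (hB.2.2 x y hxy).exists

lemma fano_third {B : Finset (Finset V)} (hB : IsFano B) {b : Finset V} (hb : b ∈ B)
    {x y : V} (hx : x ∈ b) (hy : y ∈ b) (hxy : x ≠ y) :
    ∃ z, z ≠ x ∧ z ≠ y ∧ b = {x, y, z} := by
  have h3 := hB.2.1 b hb
  rw [Finset.card_eq_three] at h3
  obtain ⟨a, c, d, hac, had, hcd, rfl⟩ := h3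
  simp only [Finset.mem_insert, Finset.mem_singleton] at hx hy
  rcases hx with rfl|rfl|rfl <;> rcases hy with rfl|rfl|rfl <;>
    first
    | exact absurd rfl hxy
    | exact ⟨a, by tauto, by tauto, by ext t; simp; try tauto⟩
    | exact ⟨c, by tauto, by tauto, by ext t; simp; try tauto⟩
    | exact ⟨d, by tauto, by tauto, by ext t; simp; try tauto⟩

lemma fano_pair {B : Finset (Finset V)} (hB : IsFano B) {b : Finset V} (hb : b ∈ B)
    {x : V} (hx : x ∈ b) : ∃ u v, u ≠ v ∧ x ≠ u ∧ x ≠ v ∧ b = {x, u, v} := by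
  have h3 := hB.2.1 b hb
  rw [Finset.card_eq_three] at h3
  obtain ⟨a, c, d, hac, had, hcd, rfl⟩ := h3
  simp only [Finset.mem_insert, Finset.mem_singleton] at hx
  rcases hx with rfl|rfl|rfl
  · exact ⟨c, d, hcd, hac, had, by ext t; simp; try tauto⟩
  · exact ⟨a, d, had, by tauto, hcd, by ext t; simp; try tauto⟩
  · exact ⟨a, c, hac, by tauto, by tauto, by ext t; simp; try tauto⟩

lemma fano_cyc {B : Finset (Finset V)} {r : V → V → Prop} (hr : IsOrientation B r) {x y z : V}
    (hb : ({x,y,z} : Finset V) ∈ B) (hxy : r x y) : r y z ∧ r z x := by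
  rcases hr.2.1 x y z hb with ⟨-, h2, h3⟩ | ⟨-, -, h3⟩
  · exact ⟨h2, h3⟩
  · exact absurd h3 (hr.1 x y hxy)

lemma fano_outIn {B : Finset (Finset V)} {r : V → V → Prop} (hr : IsOrientation B r) {x a c : V}
    (hb : ({x,a,c} : Finset V) ∈ B) :
    ∃ u v, r x u ∧ r v x ∧ ({x,a,c} : Finset V) = {x,u,v} := by
  rcases hr.2.1 x a c hb with ⟨h1, -, h3⟩ | ⟨h1, -, h3⟩
  · exact ⟨a, c, h1, h3, rfl⟩
  · exact ⟨c, a, h1, h3, by ext t; simp; try tauto⟩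

end FanoAux

section FanoAux2
set_option linter.unusedSectionVars false
variable {V : Type*} [DecidableEq V] [Fintype V]

lemma fano_threeBlocks {B : Finset (Finset V)} (hB : IsFano B) (x : V) :
    ∃ b1 b2 b3 : Finset V, b1 ∈ B ∧ b2 ∈ B ∧ b3 ∈ B ∧ x ∈ b1 ∧ x ∈ b2 ∧ x ∈ b3 ∧
      b1 ≠ b2 ∧ b1 ≠ b3 ∧ b2 ≠ b3 ∧ (∀ v : V, v ∈ b1 ∨ v ∈ b2 ∨ v ∈ b3) ∧
      (∀ b ∈ B, x ∈ b → b = b1 ∨ b = b2 ∨ b = b3) := by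
  have h7 := hB.1
  have hnt : Nontrivial V := Fintype.one_lt_card_iff_nontrivial.mp (by omega)
  obtain ⟨y, hyx⟩ := exists_ne x
  obtain ⟨b1, hb1, hxb1, hyb1⟩ := fano_exists_block hB (Ne.symm hyx)
  have hc1 : b1.card = 3 := hB.2.1 b1 hb1
  have hz : ∃ z, z ∉ b1 := by
    by_contra h
    push_neg at h
    have : b1 = Finset.univ := Finset.eq_univ_iff_forall.mpr h
    rw [this, Finset.card_univ, h7] at hc1
    omega
  obtain ⟨z, hz⟩ := hz
  have hzx : z ≠ x := fun h => hz (h ▸ hxb1)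
  obtain ⟨b2, hb2, hxb2, hzb2⟩ := fano_exists_block hB (Ne.symm hzx)
  have hc2 : b2.card = 3 := hB.2.1 b2 hb2
  have hw : ∃ w, w ∉ b1 ∪ b2 := by
    by_contra h
    push_neg at h
    have h' : (b1 ∪ b2) = Finset.univ := Finset.eq_univ_iff_forall.mpr h
    have := Finset.card_union_le b1 b2
    rw [h', Finset.card_univ, h7, hc1, hc2] at this
    omega
  obtain ⟨w, hw⟩ := hw
  have hwb1 : w ∉ b1 := fun h => hw (Finset.mem_union_left _ h)
  have hwb2 : w ∉ b2 := fun h => hw (Finset.mem_union_right _ h)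
  have hwx : w ≠ x := fun h => hwb1 (h ▸ hxb1)
  obtain ⟨b3, hb3, hxb3, hwb3⟩ := fano_exists_block hB (Ne.symm hwx)
  have hc3 : b3.card = 3 := hB.2.1 b3 hb3
  have h12 : b1 ≠ b2 := fun h => hz (by rw [h]; exact hzb2)
  have h13 : b1 ≠ b3 := fun h => hwb1 (by rw [h]; exact hwb3)
  have h23 : b2 ≠ b3 := fun h => hwb2 (by rw [h]; exact hwb3)
  have key : ∀ {c c' : Finset V}, c ∈ B → c' ∈ B → x ∈ c → x ∈ c' →
      ∀ u, u ∈ c → u ∈ c' → u ≠ x → c = c' :=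
    fun hc hc' hxc hxc' u hu hu' hux => fano_uniq hB hc hc' hux hu hxc hu' hxc'
  have hi12 : b1 ∩ b2 = {x} := by
    apply Finset.Subset.antisymm
    · intro u hu
      simp only [Finset.mem_inter] at hu
      simp only [Finset.mem_singleton]
      by_contra hux
      exact h12 (key hb1 hb2 hxb1 hxb2 u hu.1 hu.2 hux)
    · intro u hu
      simp only [Finset.mem_singleton] at hu
      subst hu
      exact Finset.mem_inter.mpr ⟨hxb1, hxb2⟩
  have hi3 : (b1 ∪ b2) ∩ b3 = {x} := by
    apply Finset.Subset.antisymm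
    · intro u hu
      simp only [Finset.mem_inter, Finset.mem_union] at hu
      simp only [Finset.mem_singleton]
      by_contra hux
      rcases hu.1 with h | h
      · exact h13 (key hb1 hb3 hxb1 hxb3 u h hu.2 hux)
      · exact h23 (key hb2 hb3 hxb2 hxb3 u h hu.2 hux)
    · intro u hu
      simp only [Finset.mem_singleton] at hu
      subst hu
      exact Finset.mem_inter.mpr ⟨Finset.mem_union_left _ hxb1, hxb3⟩
  have hcu12 : (b1 ∪ b2).card = 5 := by
    have := Finset.card_union_add_card_inter b1 b2
    rw [hi12, hc1, hc2, Finset.card_singleton] at this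
    omega
  have hcu : (b1 ∪ b2 ∪ b3).card = 7 := by
    have := Finset.card_union_add_card_inter (b1 ∪ b2) b3
    rw [hi3, hcu12, hc3, Finset.card_singleton] at this
    omega
  have huniv : b1 ∪ b2 ∪ b3 = Finset.univ := Finset.eq_univ_of_card _ (by rw [hcu, h7])
  have hcov : ∀ v : V, v ∈ b1 ∨ v ∈ b2 ∨ v ∈ b3 := by
    intro v
    have : v ∈ b1 ∪ b2 ∪ b3 := by rw [huniv]; exact Finset.mem_univ v
    simpa [Finset.mem_union, or_assoc] using this
  refine ⟨b1, b2, b3, hb1, hb2, hb3, hxb1, hxb2, hxb3, h12, h13, h23, hcov, ?_⟩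
  intro b hb hxb
  obtain ⟨u, v, huv, hxu, hxv, rfl⟩ := fano_pair hB hb hxb
  have hub : u ∈ ({x,u,v} : Finset V) := by simp
  rcases hcov u with h | h | h
  · exact Or.inl (key hb hb1 hxb hxb1 u hub h (Ne.symm hxu))
  · exact Or.inr (Or.inl (key hb hb2 hxb hxb2 u hub h (Ne.symm hxu)))
  · exact Or.inr (Or.inr (key hb hb3 hxb hxb3 u hub h (Ne.symm hxu)))

lemma fano_Nblock {B : Finset (Finset V)} {r : V → V → Prop}
    (hB : IsFano B) (hr : IsOrientation B r) (x : V) :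
    ∃ n, n ∈ B ∧ x ∉ n ∧ ∀ y, (r x y ↔ y ∈ n) := by
  have irr : ∀ a, ¬ r a a := fun a h => hr.1 a a h h
  obtain ⟨b1, b2, b3, hb1, hb2, hb3, hx1, hx2, hx3, h12, h13, h23, hcov, hcovB⟩ :=
    fano_threeBlocks hB x
  obtain ⟨a1, c1, hac1, hxa1, hxc1, he1⟩ := fano_pair hB hb1 hx1
  obtain ⟨a2, c2, hac2, hxa2, hxc2, he2⟩ := fano_pair hB hb2 hx2
  obtain ⟨a3, c3, hac3, hxa3, hxc3, he3⟩ := fano_pair hB hb3 hx3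
  obtain ⟨u1, v1, hu1, hv1, hq1⟩ := fano_outIn hr (he1 ▸ hb1)
  obtain ⟨u2, v2, hu2, hv2, hq2⟩ := fano_outIn hr (he2 ▸ hb2)
  obtain ⟨u3, v3, hu3, hv3, hq3⟩ := fano_outIn hr (he3 ▸ hb3)
  have hb1' : b1 = {x, u1, v1} := he1.trans hq1
  have hb2' : b2 = {x, u2, v2} := he2.trans hq2
  have hb3' : b3 = {x, u3, v3} := he3.trans hq3
  have hne12 : ({x,u1,v1} : Finset V) ≠ {x,u2,v2} := by rw [← hb1', ← hb2']; exact h12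
  have hne13 : ({x,u1,v1} : Finset V) ≠ {x,u3,v3} := by rw [← hb1', ← hb3']; exact h13
  have hne23 : ({x,u2,v2} : Finset V) ≠ {x,u3,v3} := by rw [← hb2', ← hb3']; exact h23
  have hn : ({u1, u2, u3} : Finset V) ∈ B :=
    hr.2.2 x u1 v1 u2 v2 u3 v3 (hb1' ▸ hb1) (hb2' ▸ hb2) (hb3' ▸ hb3)
      hne12 hne13 hne23 hu1 hu2 hu3
  have hneq : ∀ {a b : V}, r a b → a ≠ b := fun h heq => irr _ (heq ▸ h)
  refine ⟨{u1, u2, u3}, hn, ?_, ?_⟩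
  · simp only [Finset.mem_insert, Finset.mem_singleton]
    push_neg
    exact ⟨hneq hu1, hneq hu2, hneq hu3⟩
  · intro y
    constructor
    · intro hxy
      simp only [Finset.mem_insert, Finset.mem_singleton]
      rcases hcov y with h | h | h
      · rw [hb1'] at h
        simp only [Finset.mem_insert, Finset.mem_singleton] at h
        rcases h with rfl | rfl | rfl
        · exact absurd hxy (irr _)
        · exact Or.inl rfl
        · exact absurd hxy (hr.1 _ _ hv1)
      · rw [hb2'] at h
        simp only [Finset.mem_insert, Finset.mem_singleton] at h
        rcases h with rfl | rfl | rfl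
        · exact absurd hxy (irr _)
        · exact Or.inr (Or.inl rfl)
        · exact absurd hxy (hr.1 _ _ hv2)
      · rw [hb3'] at h
        simp only [Finset.mem_insert, Finset.mem_singleton] at h
        rcases h with rfl | rfl | rfl
        · exact absurd hxy (irr _)
        · exact Or.inr (Or.inr rfl)
        · exact absurd hxy (hr.1 _ _ hv3)
    · intro hy
      simp only [Finset.mem_insert, Finset.mem_singleton] at hy
      rcases hy with rfl | rfl | rfl
      · exact hu1
      · exact hu2
      · exact hu3
end FanoAux2

section FanoAux3
set_option linter.unusedSectionVars false
set_option maxHeartbeats 4000000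
variable {V : Type*} [DecidableEq V] [Fintype V]

lemma fano_structure {B : Finset (Finset V)} {r : V → V → Prop}
    (hB : IsFano B) (hr : IsOrientation B r) :
    ∃ e : Fin 7 ≃ V, (∀ b : Finset (Fin 7), b.image e ∈ B ↔ b ∈ fanoCanB) ∧
      (∀ i j : Fin 7, r (e i) (e j) ↔ fanoCanR i j) := by
  have hA := hr.1
  have irr : ∀ a, ¬ r a a := fun a h => hA a a h h
  have hneq : ∀ {a b : V}, r a b → a ≠ b := fun h heq => irr _ (heq ▸ h)
  have h7 := hB.1
  -- a flag
  obtain ⟨p0, p1, h01⟩ : ∃ a b : V, r a b := by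
    have hnt : Nontrivial V := Fintype.one_lt_card_iff_nontrivial.mp (by omega)
    obtain ⟨a, b, hab⟩ := exists_pair_ne V
    obtain ⟨c, hc, hac, hbc⟩ := fano_exists_block hB hab
    obtain ⟨u, v, huv, hau, hav, hceq⟩ := fano_pair hB hc hac
    rcases hr.2.1 a u v (hceq ▸ hc) with ⟨h, -, -⟩ | ⟨h, -, -⟩
    · exact ⟨a, u, h⟩
    · exact ⟨a, v, h⟩
  have ne01 : p0 ≠ p1 := hneq h01
  -- block {p0,p1,p3}
  obtain ⟨b', hb'B, h0b', h1b'⟩ := fano_exists_block hB ne01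
  obtain ⟨p3, h3ne0, h3ne1, hb'eq⟩ := fano_third hB hb'B h0b' h1b' ne01
  have K013 : ({p0,p1,p3} : Finset V) ∈ B := hb'eq ▸ hb'B
  obtain ⟨h13, h30⟩ := fano_cyc hr K013 h01
  -- out-neighborhood of p0
  obtain ⟨n0, hn0B, h0n0, hn0⟩ := fano_Nblock hB hr p0
  have h1n0 : p1 ∈ n0 := (hn0 p1).mp h01
  obtain ⟨a, c, hac, h1a, h1c, hn0e⟩ := fano_pair hB hn0B h1n0
  obtain ⟨p2, p4, h12, h41, hn0q⟩ := fano_outIn hr (hn0e ▸ hn0B)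
  have hn0eq : n0 = {p1, p2, p4} := hn0e.trans hn0q
  have h2n0 : p2 ∈ n0 := by rw [hn0eq]; simp
  have h4n0 : p4 ∈ n0 := by rw [hn0eq]; simp
  have h02 : r p0 p2 := (hn0 p2).mpr h2n0
  have h04 : r p0 p4 := (hn0 p4).mpr h4n0
  have K124 : ({p1,p2,p4} : Finset V) ∈ B := hn0eq ▸ hn0B
  obtain ⟨h24, -⟩ := fano_cyc hr K124 h12
  -- blocks {p0,p2,p6} and {p0,p4,p5}
  have ne02 : p0 ≠ p2 := hneq h02
  have ne04 : p0 ≠ p4 := hneq h04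
  obtain ⟨b2', hb2'B, hx2, hy2⟩ := fano_exists_block hB ne02
  obtain ⟨p6, h6ne0, h6ne2, hb2'eq⟩ := fano_third hB hb2'B hx2 hy2 ne02
  have K026 : ({p0,p2,p6} : Finset V) ∈ B := hb2'eq ▸ hb2'B
  obtain ⟨h26, h60⟩ := fano_cyc hr K026 h02
  obtain ⟨b3', hb3'B, hx3, hy3⟩ := fano_exists_block hB ne04
  obtain ⟨p5, h5ne0, h5ne4, hb3'eq⟩ := fano_third hB hb3'B hx3 hy3 ne04
  have K045 : ({p0,p4,p5} : Finset V) ∈ B := hb3'eq ▸ hb3'B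
  obtain ⟨h45, h50⟩ := fano_cyc hr K045 h04
  -- distinctness
  have h3n0 : p3 ∉ n0 := fun h => hA p3 p0 h30 ((hn0 p3).mpr h)
  have ne03 : p0 ≠ p3 := h3ne0.symm
  have ne13 : p1 ≠ p3 := h3ne1.symm
  have ne12 : p1 ≠ p2 := hneq h12
  have ne23 : p2 ≠ p3 := fun h => h3n0 (h ▸ h2n0)
  have ne14 : p1 ≠ p4 := (hneq h41).symm
  have ne24 : p2 ≠ p4 := hneq h24
  have ne34 : p3 ≠ p4 := fun h => h3n0 (h ▸ h4n0)
  have ne05 : p0 ≠ p5 := h5ne0.symm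
  have ne45 : p4 ≠ p5 := hneq h45
  have ne15 : p1 ≠ p5 := by
    intro h
    have hK : ({p0,p4,p5} : Finset V) = {p0,p1,p3} :=
      fano_uniq hB K045 K013 ne05 (by simp) (by simp) (by simp) (by rw [← h]; simp)
    have h4 : p4 ∈ ({p0,p1,p3} : Finset V) := by rw [← hK]; simp
    simp only [Finset.mem_insert, Finset.mem_singleton] at h4
    rcases h4 with h' | h' | h'
    · exact ne04 h'.symm
    · exact ne14 h'.symm
    · exact ne34 h'.symm
  have ne25 : p2 ≠ p5 := by
    intro h
    have hK : ({p0,p4,p5} : Finset V) = {p1,p2,p4} :=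
      fano_uniq hB K045 K124 ne45 (by simp) (by simp) (by simp) (by rw [← h]; simp)
    have h0 : p0 ∈ n0 := by rw [hn0eq, ← hK]; simp
    exact h0n0 h0
  have ne35 : p3 ≠ p5 := by
    intro h
    have hK : ({p0,p4,p5} : Finset V) = {p0,p1,p3} :=
      fano_uniq hB K045 K013 ne03 (by simp) (by rw [h]; simp) (by simp) (by simp)
    have h4 : p4 ∈ ({p0,p1,p3} : Finset V) := by rw [← hK]; simp
    simp only [Finset.mem_insert, Finset.mem_singleton] at h4
    rcases h4 with h' | h' | h'
    · exact ne04 h'.symm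
    · exact ne14 h'.symm
    · exact ne34 h'.symm
  have ne06 : p0 ≠ p6 := h6ne0.symm
  have ne26 : p2 ≠ p6 := h6ne2.symm
  have ne16 : p1 ≠ p6 := by
    intro h
    have hK : ({p0,p2,p6} : Finset V) = {p0,p1,p3} :=
      fano_uniq hB K026 K013 ne01 (by simp) (by rw [h]; simp) (by simp) (by simp)
    have h2 : p2 ∈ ({p0,p1,p3} : Finset V) := by rw [← hK]; simp
    simp only [Finset.mem_insert, Finset.mem_singleton] at h2
    rcases h2 with h' | h' | h'
    · exact ne02 h'.symm
    · exact ne12 h'.symm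
    · exact ne23 h'
  have ne36 : p3 ≠ p6 := by
    intro h
    have hK : ({p0,p2,p6} : Finset V) = {p0,p1,p3} :=
      fano_uniq hB K026 K013 ne03 (by simp) (by rw [h]; simp) (by simp) (by simp)
    have h2 : p2 ∈ ({p0,p1,p3} : Finset V) := by rw [← hK]; simp
    simp only [Finset.mem_insert, Finset.mem_singleton] at h2
    rcases h2 with h' | h' | h'
    · exact ne02 h'.symm
    · exact ne12 h'.symm
    · exact ne23 h'
  have ne46 : p4 ≠ p6 := by
    intro h
    have hK : ({p0,p2,p6} : Finset V) = {p0,p4,p5} :=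
      fano_uniq hB K026 K045 ne04 (by simp) (by rw [h]; simp) (by simp) (by simp)
    have h2 : p2 ∈ ({p0,p4,p5} : Finset V) := by rw [← hK]; simp
    simp only [Finset.mem_insert, Finset.mem_singleton] at h2
    rcases h2 with h' | h' | h'
    · exact ne02 h'.symm
    · exact ne24 h'
    · exact ne25 h'
  have ne56 : p5 ≠ p6 := by
    intro h
    have hK : ({p0,p2,p6} : Finset V) = {p0,p4,p5} :=
      fano_uniq hB K026 K045 ne06 (by simp) (by simp) (by simp) (by rw [← h]; simp)
    have h2 : p2 ∈ ({p0,p4,p5} : Finset V) := by rw [← hK]; simp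
    simp only [Finset.mem_insert, Finset.mem_singleton] at h2
    rcases h2 with h' | h' | h'
    · exact ne02 h'.symm
    · exact ne24 h'
    · exact ne25 h'
  -- the labeling
  set f : Fin 7 → V := ![p0,p1,p2,p3,p4,p5,p6] with hf
  have hinj : Function.Injective f := by
    intro i j h
    fin_cases i <;> fin_cases j <;>
      first
      | rfl
      | exact absurd h ne01 | exact absurd h ne01.symm
      | exact absurd h ne02 | exact absurd h ne02.symm
      | exact absurd h ne03 | exact absurd h ne03.symm
      | exact absurd h ne04 | exact absurd h ne04.symm
      | exact absurd h ne05 | exact absurd h ne05.symm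
      | exact absurd h ne06 | exact absurd h ne06.symm
      | exact absurd h ne12 | exact absurd h ne12.symm
      | exact absurd h ne13 | exact absurd h ne13.symm
      | exact absurd h ne14 | exact absurd h ne14.symm
      | exact absurd h ne15 | exact absurd h ne15.symm
      | exact absurd h ne16 | exact absurd h ne16.symm
      | exact absurd h ne23 | exact absurd h ne23.symm
      | exact absurd h ne24 | exact absurd h ne24.symm
      | exact absurd h ne25 | exact absurd h ne25.symm
      | exact absurd h ne26 | exact absurd h ne26.symm
      | exact absurd h ne34 | exact absurd h ne34.symm
      | exact absurd h ne35 | exact absurd h ne35.symm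
      | exact absurd h ne36 | exact absurd h ne36.symm
      | exact absurd h ne45 | exact absurd h ne45.symm
      | exact absurd h ne46 | exact absurd h ne46.symm
      | exact absurd h ne56 | exact absurd h ne56.symm
  have hbij : Function.Bijective f :=
    (Fintype.bijective_iff_injective_and_card f).mpr ⟨hinj, by rw [Fintype.card_fin, h7]⟩
  have hsurj : ∀ v : V, v = p0 ∨ v = p1 ∨ v = p2 ∨ v = p3 ∨ v = p4 ∨ v = p5 ∨ v = p6 := by
    intro v
    obtain ⟨i, rfl⟩ := hbij.2 v
    fin_cases i <;>
      first
      | exact Or.inl rfl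
      | exact Or.inr (Or.inl rfl)
      | exact Or.inr (Or.inr (Or.inl rfl))
      | exact Or.inr (Or.inr (Or.inr (Or.inl rfl)))
      | exact Or.inr (Or.inr (Or.inr (Or.inr (Or.inl rfl))))
      | exact Or.inr (Or.inr (Or.inr (Or.inr (Or.inr (Or.inl rfl)))))
      | exact Or.inr (Or.inr (Or.inr (Or.inr (Or.inr (Or.inr rfl)))))
  -- N(1) : third point of block(p2,p3) is p5
  obtain ⟨n1, hn1B, h1n1, hn1⟩ := fano_Nblock hB hr p1
  have h2n1 : p2 ∈ n1 := (hn1 p2).mp h12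
  have h3n1 : p3 ∈ n1 := (hn1 p3).mp h13
  obtain ⟨q, hqne2, hqne3, hn1eq⟩ := fano_third hB hn1B h2n1 h3n1 ne23
  have hqn1 : q ∈ n1 := by rw [hn1eq]; simp
  have hq1 : q ≠ p1 := fun h => h1n1 (h ▸ hqn1)
  have hq0 : q ≠ p0 := fun h => hA p0 p1 h01 ((hn1 p0).mpr (h ▸ hqn1))
  have hq4 : q ≠ p4 := fun h => hA p4 p1 h41 ((hn1 p4).mpr (h ▸ hqn1))
  have hq6 : q ≠ p6 := by
    intro h
    have hK : n1 = ({p0,p2,p6} : Finset V) :=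
      fano_uniq hB hn1B K026 ne26 h2n1 (h ▸ hqn1) (by simp) (by simp)
    have h3 : p3 ∈ ({p0,p2,p6} : Finset V) := hK ▸ h3n1
    simp only [Finset.mem_insert, Finset.mem_singleton] at h3
    rcases h3 with h' | h' | h'
    · exact ne03 h'.symm
    · exact ne23 h'.symm
    · exact ne36 h'
  have hq5 : q = p5 := by
    rcases hsurj q with h|h|h|h|h|h|h
    · exact absurd h hq0
    · exact absurd h hq1
    · exact absurd h hqne2
    · exact absurd h hqne3
    · exact absurd h hq4
    · exact h
    · exact absurd h hq6
  rw [hq5] at hn1eq hqn1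
  have K235 : ({p2,p3,p5} : Finset V) ∈ B := hn1eq ▸ hn1B
  have h15 : r p1 p5 := (hn1 p5).mpr hqn1
  -- N(2) : third point of block(p4,p6) is p3
  obtain ⟨n2, hn2B, h2n2, hn2⟩ := fano_Nblock hB hr p2
  have h4n2 : p4 ∈ n2 := (hn2 p4).mp h24
  have h6n2 : p6 ∈ n2 := (hn2 p6).mp h26
  obtain ⟨q', hq'ne4, hq'ne6, hn2eq⟩ := fano_third hB hn2B h4n2 h6n2 ne46
  have hq'n2 : q' ∈ n2 := by rw [hn2eq]; simp
  have hq'2 : q' ≠ p2 := fun h => h2n2 (h ▸ hq'n2)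
  have hq'0 : q' ≠ p0 := fun h => hA p0 p2 h02 ((hn2 p0).mpr (h ▸ hq'n2))
  have hq'1 : q' ≠ p1 := fun h => hA p1 p2 h12 ((hn2 p1).mpr (h ▸ hq'n2))
  have hq'5 : q' ≠ p5 := by
    intro h
    have hK : n2 = ({p0,p4,p5} : Finset V) :=
      fano_uniq hB hn2B K045 ne45 h4n2 (h ▸ hq'n2) (by simp) (by simp)
    have h6 : p6 ∈ ({p0,p4,p5} : Finset V) := hK ▸ h6n2
    simp only [Finset.mem_insert, Finset.mem_singleton] at h6
    rcases h6 with h' | h' | h'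
    · exact ne06 h'.symm
    · exact ne46 h'.symm
    · exact ne56 h'.symm
  have hq'3 : q' = p3 := by
    rcases hsurj q' with h|h|h|h|h|h|h
    · exact absurd h hq'0
    · exact absurd h hq'1
    · exact absurd h hq'2
    · exact h
    · exact absurd h hq'ne4
    · exact absurd h hq'5
    · exact absurd h hq'ne6
  rw [hq'3] at hn2eq hq'n2
  have K346 : ({p3,p4,p6} : Finset V) ∈ B := by
    have : ({p3,p4,p6} : Finset V) = {p4,p6,p3} := by ext t; simp; try tauto
    rw [this, ← hn2eq]; exact hn2B
  have h23 : r p2 p3 := (hn2 p3).mpr hq'n2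
  -- N(4) : third point of block(p1,p5) is p6
  obtain ⟨n4, hn4B, h4n4, hn4⟩ := fano_Nblock hB hr p4
  have h1n4 : p1 ∈ n4 := (hn4 p1).mp h41
  have h5n4 : p5 ∈ n4 := (hn4 p5).mp h45
  obtain ⟨q2, hq2ne1, hq2ne5, hn4eq⟩ := fano_third hB hn4B h1n4 h5n4 ne15
  have hq2n4 : q2 ∈ n4 := by rw [hn4eq]; simp
  have hq2_4 : q2 ≠ p4 := fun h => h4n4 (h ▸ hq2n4)
  have hq2_0 : q2 ≠ p0 := fun h => hA p0 p4 h04 ((hn4 p0).mpr (h ▸ hq2n4))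
  have hq2_2 : q2 ≠ p2 := fun h => hA p2 p4 h24 ((hn4 p2).mpr (h ▸ hq2n4))
  have hq2_3 : q2 ≠ p3 := by
    intro h
    have hK : n4 = ({p0,p1,p3} : Finset V) :=
      fano_uniq hB hn4B K013 ne13 h1n4 (h ▸ hq2n4) (by simp) (by simp)
    have h5 : p5 ∈ ({p0,p1,p3} : Finset V) := hK ▸ h5n4
    simp only [Finset.mem_insert, Finset.mem_singleton] at h5
    rcases h5 with h' | h' | h'
    · exact ne05 h'.symm
    · exact ne15 h'.symm
    · exact ne35 h'.symm
  have hq2_6 : q2 = p6 := by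
    rcases hsurj q2 with h|h|h|h|h|h|h
    · exact absurd h hq2_0
    · exact absurd h hq2ne1
    · exact absurd h hq2_2
    · exact absurd h hq2_3
    · exact absurd h hq2_4
    · exact absurd h hq2ne5
    · exact h
  rw [hq2_6] at hn4eq hq2n4
  have K156 : ({p1,p5,p6} : Finset V) ∈ B := hn4eq ▸ hn4B
  have h46 : r p4 p6 := (hn4 p6).mpr hq2n4
  -- the three blocks through p0
  have dK1 : ({p0,p1,p3} : Finset V) ≠ {p0,p2,p6} := by
    intro h
    have : p1 ∈ ({p0,p2,p6} : Finset V) := by rw [← h]; simp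
    simp only [Finset.mem_insert, Finset.mem_singleton] at this
    rcases this with h'|h'|h'
    · exact ne01 h'.symm
    · exact ne12 h'
    · exact ne16 h'
  have dK2 : ({p0,p1,p3} : Finset V) ≠ {p0,p4,p5} := by
    intro h
    have : p1 ∈ ({p0,p4,p5} : Finset V) := by rw [← h]; simp
    simp only [Finset.mem_insert, Finset.mem_singleton] at this
    rcases this with h'|h'|h'
    · exact ne01 h'.symm
    · exact ne14 h'
    · exact ne15 h'
  have dK3 : ({p0,p2,p6} : Finset V) ≠ {p0,p4,p5} := by
    intro h
    have : p2 ∈ ({p0,p4,p5} : Finset V) := by rw [← h]; simp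
    simp only [Finset.mem_insert, Finset.mem_singleton] at this
    rcases this with h'|h'|h'
    · exact ne02 h'.symm
    · exact ne24 h'
    · exact ne25 h'
  have through0 : ∀ c ∈ B, p0 ∈ c →
      c = ({p0,p1,p3} : Finset V) ∨ c = {p0,p2,p6} ∨ c = {p0,p4,p5} := by
    obtain ⟨c1, c2, c3, -, -, -, -, -, -, -, -, -, -, hcovB⟩ := fano_threeBlocks hB p0
    intro c hc h0c
    have g0 := hcovB c hc h0c
    have g1 := hcovB _ K013 (by simp)
    have g2 := hcovB _ K026 (by simp)
    have g3 := hcovB _ K045 (by simp)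
    rcases g1 with h1|h1|h1 <;> rcases g2 with h2|h2|h2 <;> rcases g3 with h3|h3|h3 <;>
      first
      | exact absurd (h1.trans h2.symm) dK1
      | exact absurd (h1.trans h3.symm) dK2
      | exact absurd (h2.trans h3.symm) dK3
      | (rcases g0 with h0|h0|h0 <;>
          first
          | exact Or.inl (h0.trans h1.symm)
          | exact Or.inr (Or.inl (h0.trans h2.symm))
          | exact Or.inr (Or.inr (h0.trans h3.symm)))
  -- N(3) = {p0,p4,p5}
  obtain ⟨n3, hn3B, h3n3, hn3⟩ := fano_Nblock hB hr p3
  have h0n3 : p0 ∈ n3 := (hn3 p0).mp h30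
  have hn3eq : n3 = ({p0,p4,p5} : Finset V) := by
    rcases through0 n3 hn3B h0n3 with h|h|h
    · exact absurd (by rw [h]; simp) h3n3
    · exfalso
      have : p2 ∈ n3 := by rw [h]; simp
      exact hA p2 p3 h23 ((hn3 p2).mpr this)
    · exact h
  have h34 : r p3 p4 := (hn3 p4).mpr (by rw [hn3eq]; simp)
  have h35 : r p3 p5 := (hn3 p5).mpr (by rw [hn3eq]; simp)
  -- N(5) = {p0,p2,p6}
  obtain ⟨n5, hn5B, h5n5, hn5⟩ := fano_Nblock hB hr p5
  have h0n5 : p0 ∈ n5 := (hn5 p0).mp h50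
  have hn5eq : n5 = ({p0,p2,p6} : Finset V) := by
    rcases through0 n5 hn5B h0n5 with h|h|h
    · exfalso
      have : p1 ∈ n5 := by rw [h]; simp
      exact hA p1 p5 h15 ((hn5 p1).mpr this)
    · exact h
    · exact absurd (by rw [h]; simp) h5n5
  have h52 : r p5 p2 := (hn5 p2).mpr (by rw [hn5eq]; simp)
  have h56 : r p5 p6 := (hn5 p6).mpr (by rw [hn5eq]; simp)
  -- N(6) = {p0,p1,p3}
  obtain ⟨n6, hn6B, h6n6, hn6⟩ := fano_Nblock hB hr p6
  have h0n6 : p0 ∈ n6 := (hn6 p0).mp h60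
  have hn6eq : n6 = ({p0,p1,p3} : Finset V) := by
    rcases through0 n6 hn6B h0n6 with h|h|h
    · exact h
    · exact absurd (by rw [h]; simp) h6n6
    · exfalso
      have : p4 ∈ n6 := by rw [h]; simp
      exact hA p4 p6 h46 ((hn6 p4).mpr this)
  have h61 : r p6 p1 := (hn6 p1).mpr (by rw [hn6eq]; simp)
  have h63 : r p6 p3 := (hn6 p3).mpr (by rw [hn6eq]; simp)
  -- every block is one of the seven
  have hsub : ∀ b ∈ B, b = ({p0,p1,p3} : Finset V) ∨ b = {p1,p2,p4} ∨ b = {p2,p3,p5} ∨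
      b = {p3,p4,p6} ∨ b = {p0,p4,p5} ∨ b = {p1,p5,p6} ∨ b = {p0,p2,p6} := by
    intro b hb
    have hbne : b.Nonempty := Finset.card_pos.mp (by rw [hB.2.1 b hb]; omega)
    obtain ⟨x, hx⟩ := hbne
    obtain ⟨u, v, huv, hxu, hxv, hbeq⟩ := fano_pair hB hb hx
    have hub : u ∈ b := by rw [hbeq]; simp
    rcases hsurj x with h|h|h|h|h|h|h <;>
      rcases hsurj u with h'|h'|h'|h'|h'|h'|h' <;>
      first
      | exact absurd (h.trans h'.symm) hxu
      | (refine Or.inl ?_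
         refine fano_uniq hB hb K013 hxu hx hub ?_ ?_
         · rw [h]; simp
         · rw [h']; simp)
      | (refine Or.inr (Or.inl ?_)
         refine fano_uniq hB hb K124 hxu hx hub ?_ ?_
         · rw [h]; simp
         · rw [h']; simp)
      | (refine Or.inr (Or.inr (Or.inl ?_))
         refine fano_uniq hB hb K235 hxu hx hub ?_ ?_
         · rw [h]; simp
         · rw [h']; simp)
      | (refine Or.inr (Or.inr (Or.inr (Or.inl ?_)))
         refine fano_uniq hB hb K346 hxu hx hub ?_ ?_
         · rw [h]; simp
         · rw [h']; simp)
      | (refine Or.inr (Or.inr (Or.inr (Or.inr (Or.inl ?_))))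
         refine fano_uniq hB hb K045 hxu hx hub ?_ ?_
         · rw [h]; simp
         · rw [h']; simp)
      | (refine Or.inr (Or.inr (Or.inr (Or.inr (Or.inr (Or.inl ?_)))))
         refine fano_uniq hB hb K156 hxu hx hub ?_ ?_
         · rw [h]; simp
         · rw [h']; simp)
      | (refine Or.inr (Or.inr (Or.inr (Or.inr (Or.inr (Or.inr ?_)))))
         refine fano_uniq hB hb K026 hxu hx hub ?_ ?_
         · rw [h]; simp
         · rw [h']; simp)
  -- the equivalence
  have hev : ∀ i : Fin 7, (Equiv.ofBijective f hbij) i = f i := fun i => rfl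
  have f0 : f 0 = p0 := by rw [hf]; rfl
  have f1 : f 1 = p1 := by rw [hf]; rfl
  have f2 : f 2 = p2 := by rw [hf]; rfl
  have f3 : f 3 = p3 := by rw [hf]; rfl
  have f4 : f 4 = p4 := by rw [hf]; rfl
  have f5 : f 5 = p5 := by rw [hf]; rfl
  have f6 : f 6 = p6 := by rw [hf]; rfl
  refine ⟨Equiv.ofBijective f hbij, ?_, ?_⟩
  · -- blocks
    have him013 : (({0,1,3} : Finset (Fin 7)).image (Equiv.ofBijective f hbij))
        = ({p0,p1,p3} : Finset V) := by
      simp only [Finset.image_insert, Finset.image_singleton, hev, f0, f1, f3]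
    have him124 : (({1,2,4} : Finset (Fin 7)).image (Equiv.ofBijective f hbij))
        = ({p1,p2,p4} : Finset V) := by
      simp only [Finset.image_insert, Finset.image_singleton, hev, f1, f2, f4]
    have him235 : (({2,3,5} : Finset (Fin 7)).image (Equiv.ofBijective f hbij))
        = ({p2,p3,p5} : Finset V) := by
      simp only [Finset.image_insert, Finset.image_singleton, hev, f2, f3, f5]
    have him346 : (({3,4,6} : Finset (Fin 7)).image (Equiv.ofBijective f hbij))
        = ({p3,p4,p6} : Finset V) := by
      simp only [Finset.image_insert, Finset.image_singleton, hev, f3, f4, f6]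
    have him450 : (({4,5,0} : Finset (Fin 7)).image (Equiv.ofBijective f hbij))
        = ({p4,p5,p0} : Finset V) := by
      simp only [Finset.image_insert, Finset.image_singleton, hev, f4, f5, f0]
    have him561 : (({5,6,1} : Finset (Fin 7)).image (Equiv.ofBijective f hbij))
        = ({p5,p6,p1} : Finset V) := by
      simp only [Finset.image_insert, Finset.image_singleton, hev, f5, f6, f1]
    have him602 : (({6,0,2} : Finset (Fin 7)).image (Equiv.ofBijective f hbij))
        = ({p6,p0,p2} : Finset V) := by
      simp only [Finset.image_insert, Finset.image_singleton, hev, f6, f0, f2]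
    have hK045' : ({p4,p5,p0} : Finset V) ∈ B := by
      have : ({p4,p5,p0} : Finset V) = {p0,p4,p5} := by ext t; simp; try tauto
      rw [this]; exact K045
    have hK156' : ({p5,p6,p1} : Finset V) ∈ B := by
      have : ({p5,p6,p1} : Finset V) = {p1,p5,p6} := by ext t; simp; try tauto
      rw [this]; exact K156
    have hK026' : ({p6,p0,p2} : Finset V) ∈ B := by
      have : ({p6,p0,p2} : Finset V) = {p0,p2,p6} := by ext t; simp; try tauto
      rw [this]; exact K026
    intro b
    constructor
    · intro hbB
      have hinj' := Finset.image_injective (Equiv.ofBijective f hbij).injective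
      rcases hsub _ hbB with h|h|h|h|h|h|h
      · have : b = ({0,1,3} : Finset (Fin 7)) := hinj' (by rw [h, him013])
        rw [this]; decide
      · have : b = ({1,2,4} : Finset (Fin 7)) := hinj' (by rw [h, him124])
        rw [this]; decide
      · have : b = ({2,3,5} : Finset (Fin 7)) := hinj' (by rw [h, him235])
        rw [this]; decide
      · have : b = ({3,4,6} : Finset (Fin 7)) := hinj' (by rw [h, him346])
        rw [this]; decide
      · have : b = ({4,5,0} : Finset (Fin 7)) := hinj' (by
          rw [h, him450]; ext t; simp; try tauto)
        rw [this]; decide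
      · have : b = ({5,6,1} : Finset (Fin 7)) := hinj' (by
          rw [h, him561]; ext t; simp; try tauto)
        rw [this]; decide
      · have : b = ({6,0,2} : Finset (Fin 7)) := hinj' (by
          rw [h, him602]; ext t; simp; try tauto)
        rw [this]; decide
    · intro hc
      simp only [fanoCanB, Finset.mem_insert, Finset.mem_singleton] at hc
      rcases hc with rfl|rfl|rfl|rfl|rfl|rfl|rfl
      · rw [him013]; exact K013
      · rw [him124]; exact K124
      · rw [him235]; exact K235
      · rw [him346]; exact K346
      · rw [him450]; exact hK045'
      · rw [him561]; exact hK156'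
      · rw [him602]; exact hK026'
  · -- orientation
    intro i j
    fin_cases i <;> fin_cases j <;>
      first
      | exact iff_of_false (fun h => hA _ _ h h) (by decide)
      | exact iff_of_true h01 (by decide)
      | exact iff_of_true h02 (by decide)
      | exact iff_of_true h04 (by decide)
      | exact iff_of_true h12 (by decide)
      | exact iff_of_true h13 (by decide)
      | exact iff_of_true h15 (by decide)
      | exact iff_of_true h23 (by decide)
      | exact iff_of_true h24 (by decide)
      | exact iff_of_true h26 (by decide)
      | exact iff_of_true h30 (by decide)
      | exact iff_of_true h34 (by decide)
      | exact iff_of_true h35 (by decide)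
      | exact iff_of_true h41 (by decide)
      | exact iff_of_true h45 (by decide)
      | exact iff_of_true h46 (by decide)
      | exact iff_of_true h50 (by decide)
      | exact iff_of_true h52 (by decide)
      | exact iff_of_true h56 (by decide)
      | exact iff_of_true h60 (by decide)
      | exact iff_of_true h61 (by decide)
      | exact iff_of_true h63 (by decide)
      | exact iff_of_false (fun h => hA _ _ h h01) (by decide)
      | exact iff_of_false (fun h => hA _ _ h h02) (by decide)
      | exact iff_of_false (fun h => hA _ _ h h04) (by decide)
      | exact iff_of_false (fun h => hA _ _ h h12) (by decide)
      | exact iff_of_false (fun h => hA _ _ h h13) (by decide)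
      | exact iff_of_false (fun h => hA _ _ h h15) (by decide)
      | exact iff_of_false (fun h => hA _ _ h h23) (by decide)
      | exact iff_of_false (fun h => hA _ _ h h24) (by decide)
      | exact iff_of_false (fun h => hA _ _ h h26) (by decide)
      | exact iff_of_false (fun h => hA _ _ h h30) (by decide)
      | exact iff_of_false (fun h => hA _ _ h h34) (by decide)
      | exact iff_of_false (fun h => hA _ _ h h35) (by decide)
      | exact iff_of_false (fun h => hA _ _ h h41) (by decide)
      | exact iff_of_false (fun h => hA _ _ h h45) (by decide)
      | exact iff_of_false (fun h => hA _ _ h h46) (by decide)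
      | exact iff_of_false (fun h => hA _ _ h h50) (by decide)
      | exact iff_of_false (fun h => hA _ _ h h52) (by decide)
      | exact iff_of_false (fun h => hA _ _ h h56) (by decide)
      | exact iff_of_false (fun h => hA _ _ h h60) (by decide)
      | exact iff_of_false (fun h => hA _ _ h h61) (by decide)
      | exact iff_of_false (fun h => hA _ _ h h63) (by decide)

end FanoAux3

section G
set_option linter.unusedSectionVars false
variable {V : Type*} [DecidableEq V] [Fintype V]

lemma fano_group_part {B : Finset (Finset V)} {r1 r2 : V → V → Prop}
    (σ : Equiv.Perm V) (hσ : IsAutomorphism B σ)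
    (hrel : ∀ x y : V, r2 (σ x) (σ y) ↔ r1 x y) :
    Nonempty ((autGroup B ⊓ relAutGroup r1 : Subgroup (Equiv.Perm V)) ≃*
      (autGroup B ⊓ relAutGroup r2 : Subgroup (Equiv.Perm V))) := by
  have hσa : σ ∈ autGroup B := hσ
  have hrel' : ∀ x y : V, r1 (σ⁻¹ x) (σ⁻¹ y) ↔ r2 x y := by
    intro x y
    rw [← hrel (σ⁻¹ x) (σ⁻¹ y), Equiv.Perm.coe_inv, Equiv.apply_symm_apply, Equiv.apply_symm_apply]
  have key : ∀ τ : Equiv.Perm V, τ ∈ autGroup B ⊓ relAutGroup r1 →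
      σ * τ * σ⁻¹ ∈ autGroup B ⊓ relAutGroup r2 := by
    intro τ hτ
    obtain ⟨hτB, hτr⟩ := Subgroup.mem_inf.mp hτ
    refine Subgroup.mem_inf.mpr ⟨mul_mem (mul_mem hσa hτB) (inv_mem hσa), ?_⟩
    intro x y
    show r2 ((σ * τ * σ⁻¹) x) ((σ * τ * σ⁻¹) y) ↔ r2 x y
    have hx : ∀ z, (σ * τ * σ⁻¹) z = σ (τ (σ⁻¹ z)) := fun z => rfl
    rw [hx, hx, hrel (τ (σ⁻¹ x)) (τ (σ⁻¹ y)), hτr (σ⁻¹ x) (σ⁻¹ y),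
      ← hrel (σ⁻¹ x) (σ⁻¹ y), Equiv.Perm.coe_inv, Equiv.apply_symm_apply, Equiv.apply_symm_apply]
  have key' : ∀ τ : Equiv.Perm V, τ ∈ autGroup B ⊓ relAutGroup r2 →
      σ⁻¹ * τ * σ ∈ autGroup B ⊓ relAutGroup r1 := by
    intro τ hτ
    obtain ⟨hτB, hτr⟩ := Subgroup.mem_inf.mp hτ
    refine Subgroup.mem_inf.mpr ⟨mul_mem (mul_mem (inv_mem hσa) hτB) hσa, ?_⟩
    intro x y
    show r1 ((σ⁻¹ * τ * σ) x) ((σ⁻¹ * τ * σ) y) ↔ r1 x y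
    have hx : ∀ z, (σ⁻¹ * τ * σ) z = σ⁻¹ (τ (σ z)) := fun z => rfl
    rw [hx, hx, hrel' (τ (σ x)) (τ (σ y)), hτr (σ x) (σ y), hrel x y]
  have hmap : Subgroup.map (MulAut.conj σ : Equiv.Perm V ≃* Equiv.Perm V).toMonoidHom
      (autGroup B ⊓ relAutGroup r1) = autGroup B ⊓ relAutGroup r2 := by
    ext τ'
    simp only [Subgroup.mem_map]
    constructor
    · rintro ⟨τ, hτ, rfl⟩
      exact key τ hτ
    · intro hτ'
      refine ⟨σ⁻¹ * τ' * σ, key' τ' hτ', ?_⟩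
      show σ * (σ⁻¹ * τ' * σ) * σ⁻¹ = τ'
      group
  exact ⟨(MulEquiv.subgroupMap (MulAut.conj σ : Equiv.Perm V ≃* Equiv.Perm V)
      (autGroup B ⊓ relAutGroup r1)).trans (MulEquiv.subgroupCongr hmap)⟩
end G

/-- Any two orientations on a Fano plane are conjugate under an automorphism of
the plane; consequently the automorphism group of an oriented Fano plane does
not depend (up to isomorphism) on the chosen orientation. -/
theorem orientation_transitive_and_group_independent {V : Type*} [DecidableEq V] [Fintype V]
    (B : Finset (Finset V)) (r1 r2 : V → V → Prop) (hB : IsFano B)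
    (h1 : IsOrientation B r1) (h2 : IsOrientation B r2) :
    (∃ σ : Equiv.Perm V, IsAutomorphism B σ ∧ ∀ x y : V, r2 (σ x) (σ y) ↔ r1 x y) ∧
    Nonempty ((autGroup B ⊓ relAutGroup r1 : Subgroup (Equiv.Perm V)) ≃*
      (autGroup B ⊓ relAutGroup r2 : Subgroup (Equiv.Perm V))) := by
  obtain ⟨e1, He1, Hr1⟩ := fano_structure hB h1
  obtain ⟨e2, He2, Hr2⟩ := fano_structure hB h2
  have hauto : IsAutomorphism B (e1.symm.trans e2) := by
    intro b
    have himg : (b.image e1.symm).image e1 = b := by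
      rw [Finset.image_image]
      simp
    have h1b : b.image (e1.symm.trans e2) = (b.image e1.symm).image e2 := by
      rw [Finset.image_image]
      rfl
    rw [h1b, He2 (b.image e1.symm), ← He1 (b.image e1.symm), himg]
  have hrel : ∀ x y : V, r2 ((e1.symm.trans e2) x) ((e1.symm.trans e2) y) ↔ r1 x y := by
    intro x y
    have h' : r2 ((e1.symm.trans e2) x) ((e1.symm.trans e2) y) ↔
        fanoCanR (e1.symm x) (e1.symm y) :=
      Hr2 (e1.symm x) (e1.symm y)
    rw [h', ← Hr1 (e1.symm x) (e1.symm y), Equiv.apply_symm_apply, Equiv.apply_symm_apply]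
  exact ⟨⟨e1.symm.trans e2, hauto, hrel⟩, fano_group_part (e1.symm.trans e2) hauto hrel⟩
end

section
/- Let (F,→) be an oriented Fano plane and let a,b be distinct points with {a,b,c} the block of F through a and b, oriented a→b→c→a. Then there exists a unique point x ≠ c with a→b→x→a, and {a,b,x} is the block through a and b of the orthogonal Fano plane F_→. -/
open scoped Classical in
/-- The block family `T(v) = { x | x → v }`, `v ∈ V`, associated with an
orientation `r` (written `F_→` in the paper). -/
noncomputable def orientBlocks {V : Type*} [DecidableEq V] [Fintype V] (r : V → V → Prop) :
    Finset (Finset V) :=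
  Finset.univ.image (fun v => Finset.univ.filter (fun x => r x v))


/-!
The out-neighbourhoods `N⁺(v) = {w | v → w}` of an oriented Fano plane are blocks: each point
lies on three blocks and has exactly one successor on each of them. Since the orientation is a
tournament on seven points, every in-neighbourhood `T(v)` has `7 - 1 - 3 = 3` points. The blocks
`N⁺(a)` and `N⁺(b)` meet in a point `v`, and `N⁺(b) = {c, v, x}`; as `a → v` and `a`, `b` have
no second common successor, `x` is the only successor of `b` other than `c` that dominates `a`.
Orienting the block `{c, v, x}`, the case `x → c` would put `a` and `c`, hence all of `{a, b, c}`,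
into `N⁺(x)`, contradicting `b → x`; so `x → v`, and `{a, b, x} = T(v)`.
-/

open Finset

theorem Finset.exists_eq_insert_pair_of_mem {α : Type*} [DecidableEq α] {s : Finset α}
    (hs : #s = 3) {a : α} (ha : a ∈ s) : ∃ y z, s = {a, y, z} := by
  obtain ⟨y, z, -, hyz⟩ := card_eq_two.1 (by rw [card_erase_of_mem ha, hs] : #(s.erase a) = 2)
  exact ⟨y, z, by rw [← hyz, insert_erase ha]⟩

theorem Finset.exists_eq_insert_pair_of_mem_of_mem {α : Type*} [DecidableEq α] {s : Finset α}
    (hs : #s = 3) {a b : α} (ha : a ∈ s) (hb : b ∈ s) (hab : a ≠ b) :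
    ∃ x, x ≠ a ∧ x ≠ b ∧ s = {a, b, x} := by
  have hb' : b ∈ s.erase a := mem_erase.2 ⟨hab.symm, hb⟩
  obtain ⟨x, hx⟩ := card_eq_one.1
    (by rw [card_erase_of_mem hb', card_erase_of_mem ha, hs] : #((s.erase a).erase b) = 1)
  have hxs : x ∈ (s.erase a).erase b := hx ▸ mem_singleton_self x
  refine ⟨x, (mem_erase.1 (mem_erase.1 hxs).2).1, (mem_erase.1 hxs).1, ?_⟩
  rw [← hx, insert_erase hb', insert_erase ha]

section

variable {V : Type*} [DecidableEq V] {B : Finset (Finset V)} {r : V → V → Prop}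

namespace IsSteiner

theorem exists_block (hS : IsSteiner B) {x y : V} (h : x ≠ y) : ∃ b ∈ B, x ∈ b ∧ y ∈ b :=
  (hS.2 x y h).exists

theorem eq_of_mem_s16 (hS : IsSteiner B) {x y : V} (h : x ≠ y) {b₁ b₂ : Finset V} (h₁ : b₁ ∈ B)
    (h₂ : b₂ ∈ B) (hx₁ : x ∈ b₁) (hy₁ : y ∈ b₁) (hx₂ : x ∈ b₂) (hy₂ : y ∈ b₂) : b₁ = b₂ :=
  (hS.2 x y h).unique ⟨h₁, hx₁, hy₁⟩ ⟨h₂, hx₂, hy₂⟩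

end IsSteiner

namespace IsFano

variable [Fintype V]

theorem card_filter_mem_eq_three (hB : IsFano B) (v : V) : #(B.filter (v ∈ ·)) = 3 := by
  have hcover : (B.filter (v ∈ ·)).biUnion (·.erase v) = univ.erase v := by
    ext w
    simp only [mem_biUnion, mem_filter, mem_erase, mem_univ, and_true]
    constructor
    · rintro ⟨b, -, hw, -⟩
      exact hw
    · intro hw
      obtain ⟨b, hb, hvb, hwb⟩ := hB.2.exists_block (Ne.symm hw)
      exact ⟨b, ⟨hb, hvb⟩, hw, hwb⟩
  have hdisj : (B.filter (v ∈ ·) : Set (Finset V)).PairwiseDisjoint (·.erase v) := by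
    intro b₁ hb₁ b₂ hb₂ hne
    rw [mem_coe, mem_filter] at hb₁ hb₂
    refine disjoint_left.2 fun w hw₁ hw₂ => hne ?_
    rw [mem_erase] at hw₁ hw₂
    exact hB.2.eq_of_mem_s16 hw₁.1 hb₁.1 hb₂.1 hw₁.2 hb₁.2 hw₂.2 hb₂.2
  have hcard := congrArg card hcover
  rw [card_biUnion hdisj, card_erase_of_mem (mem_univ v), card_univ, hB.1,
    sum_congr rfl fun b hb => by
      rw [card_erase_of_mem (mem_filter.1 hb).2, hB.2.1 b (mem_filter.1 hb).1],
    sum_const, smul_eq_mul] at hcard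
  omega

theorem exists_mem_inter (hB : IsFano B) {b₁ b₂ : Finset V} (h₁ : b₁ ∈ B) (h₂ : b₂ ∈ B) :
    ∃ p, p ∈ b₁ ∧ p ∈ b₂ := by
  obtain ⟨p, hp⟩ : b₁.Nonempty := card_pos.1 (by rw [hB.2.1 b₁ h₁]; norm_num)
  by_contra! hdisj
  have hpb₂ : p ∉ b₂ := hdisj p hp
  -- the three points of `b₂` lie on distinct blocks through `p`, none of which is `b₁`
  have hle : #b₂ ≤ #((B.filter (p ∈ ·)).erase b₁) := by
    refine card_le_card_of_forall_subsingleton (· ∈ ·) (fun w hw => ?_) (fun b hb => ?_)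
    · obtain ⟨b, hb, hpb, hwb⟩ := hB.2.exists_block (show p ≠ w by rintro rfl; exact hpb₂ hw)
      exact ⟨b, mem_erase.2 ⟨by rintro rfl; exact hdisj w hwb hw, mem_filter.2 ⟨hb, hpb⟩⟩, hwb⟩
    · rintro w₁ ⟨hw₁, hw₁b⟩ w₂ ⟨hw₂, hw₂b⟩
      by_contra hne
      obtain ⟨hbB, hpb⟩ := mem_filter.1 (mem_erase.1 hb).2
      exact hpb₂ (hB.2.eq_of_mem_s16 hne hbB h₂ hw₁b hw₂b hw₁ hw₂ ▸ hpb)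
  rw [card_erase_of_mem (mem_filter.2 ⟨h₁, hp⟩), hB.card_filter_mem_eq_three,
    hB.2.1 b₂ h₂] at hle
  omega

end IsFano

namespace IsOrientation

theorem asymm (hr : IsOrientation B r) {x y : V} : r x y → ¬ r y x :=
  hr.1 x y

theorem irrefl (hr : IsOrientation B r) (x : V) : ¬ r x x :=
  fun h => hr.asymm h h

theorem ne_of_rel (hr : IsOrientation B r) {x y : V} (h : r x y) : x ≠ y := by
  rintro rfl
  exact hr.irrefl x h

theorem exists_cyclic (hS : IsSteiner B) (hr : IsOrientation B r) {b : Finset V} {v : V}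
    (hb : b ∈ B) (hv : v ∈ b) : ∃ y z, b = {v, y, z} ∧ r v y ∧ r y z ∧ r z v := by
  obtain ⟨y, z, rfl⟩ := exists_eq_insert_pair_of_mem (hS.1 b hb) hv
  rcases hr.2.1 v y z hb with ⟨hvy, hyz, hzv⟩ | ⟨hvz, hzy, hyv⟩
  · exact ⟨y, z, rfl, hvy, hyz, hzv⟩
  · exact ⟨z, y, by rw [pair_comm], hvz, hzy, hyv⟩

theorem eq_of_mem_of_rel (hr : IsOrientation B r) {v w y z : V}
    (hw : w ∈ ({v, y, z} : Finset V)) (hvw : r v w) (hzv : r z v) : w = y := by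
  simp only [mem_insert, mem_singleton] at hw
  rcases hw with rfl | rfl | rfl
  · exact absurd hvw (hr.irrefl w)
  · rfl
  · exact absurd hzv (hr.asymm hvw)

theorem total (hS : IsSteiner B) (hr : IsOrientation B r) {x y : V} (h : x ≠ y) :
    r x y ∨ r y x := by
  obtain ⟨b, hb, hx, hy⟩ := hS.exists_block h
  obtain ⟨p, q, rfl, hxp, -, hqx⟩ := hr.exists_cyclic hS hb hx
  simp only [mem_insert, mem_singleton] at hy
  rcases hy with rfl | rfl | rfl
  · exact absurd rfl h
  · exact Or.inl hxp
  · exact Or.inr hqx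

variable [Fintype V]

theorem exists_block_mem_iff_rel (hB : IsFano B) (hr : IsOrientation B r) (v : V) :
    ∃ s ∈ B, ∀ w, w ∈ s ↔ r v w := by
  obtain ⟨b₁, b₂, b₃, h₁₂, h₁₃, h₂₃, hT⟩ := card_eq_three.1 (hB.card_filter_mem_eq_three v)
  have hthrough : ∀ b ∈ ({b₁, b₂, b₃} : Finset _), b ∈ B ∧ v ∈ b :=
    fun b hb => mem_filter.1 (hT ▸ hb)
  have hcyc : ∀ b ∈ ({b₁, b₂, b₃} : Finset _), ∃ y z, b = {v, y, z} ∧ r v y ∧ r y z ∧ r z v :=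
    fun b hb => hr.exists_cyclic hB.2 (hthrough b hb).1 (hthrough b hb).2
  obtain ⟨y₁, z₁, e₁, hy₁, -, hz₁⟩ := hcyc b₁ (by simp)
  obtain ⟨y₂, z₂, e₂, hy₂, -, hz₂⟩ := hcyc b₂ (by simp)
  obtain ⟨y₃, z₃, e₃, hy₃, -, hz₃⟩ := hcyc b₃ (by simp)
  have hblock : ({y₁, y₂, y₃} : Finset V) ∈ B := by
    subst e₁ e₂ e₃
    exact hr.2.2 v y₁ z₁ y₂ z₂ y₃ z₃ (hthrough _ (by simp)).1 (hthrough _ (by simp)).1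
      (hthrough _ (by simp)).1 h₁₂ h₁₃ h₂₃ hy₁ hy₂ hy₃
  refine ⟨_, hblock, fun w => ⟨?_, fun hvw => ?_⟩⟩
  · simp only [mem_insert, mem_singleton]
    rintro (rfl | rfl | rfl) <;> assumption
  · obtain ⟨b, hb, hvb, hwb⟩ := hB.2.exists_block (hr.ne_of_rel hvw)
    have hb' : b ∈ ({b₁, b₂, b₃} : Finset _) := hT ▸ mem_filter.2 ⟨hb, hvb⟩
    simp only [mem_insert, mem_singleton] at hb' ⊢
    rcases hb' with rfl | rfl | rfl
    · exact Or.inl (hr.eq_of_mem_of_rel (e₁ ▸ hwb) hvw hz₁)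
    · exact Or.inr (Or.inl (hr.eq_of_mem_of_rel (e₂ ▸ hwb) hvw hz₂))
    · exact Or.inr (Or.inr (hr.eq_of_mem_of_rel (e₃ ▸ hwb) hvw hz₃))

open scoped Classical in
theorem card_filter_rel_eq_three (hB : IsFano B) (hr : IsOrientation B r) (v : V) :
    #(univ.filter (r · v)) = 3 := by
  obtain ⟨s, hs, hsv⟩ := hr.exists_block_mem_iff_rel hB v
  have hin : univ.filter (r · v) = univ.erase v \ s := by
    ext w
    simp only [mem_filter, mem_univ, true_and, mem_sdiff, mem_erase, and_true, hsv]
    exact ⟨fun h => ⟨hr.ne_of_rel h, hr.asymm h⟩,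
      fun h => (hr.total hB.2 h.1).resolve_right h.2⟩
  have hsub : s ⊆ univ.erase v := fun w hw =>
    mem_erase.2 ⟨(hr.ne_of_rel ((hsv w).1 hw)).symm, mem_univ w⟩
  rw [hin, card_sdiff_of_subset hsub, card_erase_of_mem (mem_univ v), card_univ, hB.1,
    hB.2.1 s hs]

open scoped Classical in
theorem insert_pair_mem_orientBlocks (hB : IsFano B) (hr : IsOrientation B r) {a b x v : V}
    (hab : a ≠ b) (hax : a ≠ x) (hbx : b ≠ x) (hav : r a v) (hbv : r b v) (hxv : r x v) :
    ({a, b, x} : Finset V) ∈ orientBlocks r := by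
  refine mem_image.2 ⟨v, mem_univ v, (eq_of_subset_of_card_le ?_ ?_).symm⟩
  · intro w
    simp only [mem_insert, mem_singleton, mem_filter, mem_univ, true_and]
    rintro (rfl | rfl | rfl) <;> assumption
  · rw [hr.card_filter_rel_eq_three hB v, card_eq_three.2 ⟨a, b, x, hab, hax, hbx, rfl⟩]

theorem exists_common_successor (hB : IsFano B) (hr : IsOrientation B r) (a b : V) :
    ∃ v, r a v ∧ r b v := by
  obtain ⟨sa, hsa, ha⟩ := hr.exists_block_mem_iff_rel hB a
  obtain ⟨sb, hsb, hb⟩ := hr.exists_block_mem_iff_rel hB b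
  obtain ⟨v, hva, hvb⟩ := hB.exists_mem_inter hsa hsb
  exact ⟨v, (ha v).1 hva, (hb v).1 hvb⟩

theorem eq_of_common_successors (hB : IsFano B) (hr : IsOrientation B r) {a b v w : V}
    (hab : a ≠ b) (hav : r a v) (hbv : r b v) (haw : r a w) (hbw : r b w) : v = w := by
  by_contra hvw
  obtain ⟨sa, hsa, ha⟩ := hr.exists_block_mem_iff_rel hB a
  obtain ⟨sb, hsb, hb⟩ := hr.exists_block_mem_iff_rel hB b
  have hs : sa = sb := hB.2.eq_of_mem_s16 hvw hsa hsb ((ha v).2 hav) ((ha w).2 haw) ((hb v).2 hbv)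
    ((hb w).2 hbw)
  rcases hr.total hB.2 hab with h | h
  · exact hr.irrefl b ((hb b).1 (hs ▸ (ha b).2 h))
  · exact hr.irrefl a ((ha a).1 (hs ▸ (hb a).2 h))

theorem rel_of_mem_of_rel_of_rel (hB : IsFano B) (hr : IsOrientation B r) {a b c x : V}
    (habc : ({a, b, c} : Finset V) ∈ B) (hac : a ≠ c) (hxa : r x a) (hxc : r x c) : r x b := by
  obtain ⟨s, hs, hx⟩ := hr.exists_block_mem_iff_rel hB x
  have hs_eq : s = {a, b, c} :=
    hB.2.eq_of_mem_s16 hac hs habc ((hx a).2 hxa) ((hx c).2 hxc) (by simp) (by simp)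
  exact (hx b).1 (hs_eq ▸ by simp)

end IsOrientation

end

theorem unique_second_cyclic_point_general {V : Type*} [DecidableEq V] [Fintype V]
    (B : Finset (Finset V)) (r : V → V → Prop) (a b c : V)
    (hB : IsFano B) (hr : IsOrientation B r)
    (hblock : ({a, b, c} : Finset V) ∈ B) (h1 : r a b) (h2 : r b c) (h3 : r c a) :
    (∃! x : V, x ≠ c ∧ r b x ∧ r x a) ∧
    (∀ x : V, x ≠ c → r b x → r x a → ({a, b, x} : Finset V) ∈ orientBlocks r) := by
  have hab := hr.ne_of_rel h1
  obtain ⟨v, hav, hbv⟩ := hr.exists_common_successor hB a b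
  obtain ⟨sb, hsbB, hsb⟩ := hr.exists_block_mem_iff_rel hB b
  obtain ⟨x, hx_ne_c, hx_ne_v, rfl⟩ := exists_eq_insert_pair_of_mem_of_mem (hB.2.1 sb hsbB)
    ((hsb c).2 h2) ((hsb v).2 hbv) fun hcv => hr.asymm hav (hcv ▸ h3)
  have hbx : r b x := (hsb x).1 (by simp)
  have hxa : r x a := by
    refine (hr.total hB.2 fun hxa => hr.asymm h1 ((hsb a).1 (by simp [hxa]))).resolve_left ?_
    exact fun hax => hx_ne_v (hr.eq_of_common_successors hB hab hav hbv hax hbx).symm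
  have huniq : ∀ y, y ≠ c → r b y → r y a → y = x := by
    intro y hyc hby hya
    have hy : y ∈ ({c, v, x} : Finset V) := (hsb y).2 hby
    simp only [mem_insert, mem_singleton] at hy
    rcases hy with rfl | rfl | rfl
    · exact absurd rfl hyc
    · exact absurd hya (hr.asymm hav)
    · rfl
  have hxv : r x v := by
    rcases hr.2.1 c v x hsbB with ⟨-, -, hxc⟩ | ⟨-, hxv, -⟩
    · exact absurd (hr.rel_of_mem_of_rel_of_rel hB hblock (hr.ne_of_rel h3).symm hxa hxc)
        (hr.asymm hbx)
    · exact hxv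
  refine ⟨⟨x, ⟨hx_ne_c, hbx, hxa⟩, fun y hy => huniq y hy.1 hy.2.1 hy.2.2⟩,
    fun y hyc hby hya => ?_⟩
  obtain rfl := huniq y hyc hby hya
  exact hr.insert_pair_mem_orientBlocks hB hab (hr.ne_of_rel hxa).symm (hr.ne_of_rel hbx) hav hbv
    hxv

/-- In an oriented Fano plane, for a block `{a,b,c}` oriented `a→b→c→a`, there is
a unique point `x ≠ c` with `a→b→x→a`, and `{a,b,x}` is the block through `a, b`
of the orthogonal Fano plane `F_→`. -/
theorem unique_second_cyclic_point {V : Type*} [DecidableEq V] [Fintype V]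
    (B : Finset (Finset V)) (r : V → V → Prop) (a b c : V)
    (hB : IsFano B) (hr : IsOrientation B r) (hab : a ≠ b)
    (hblock : ({a, b, c} : Finset V) ∈ B) (h1 : r a b) (h2 : r b c) (h3 : r c a) :
    (∃! x : V, x ≠ c ∧ r b x ∧ r x a) ∧
    (∀ x : V, x ≠ c → r b x → r x a → ({a, b, x} : Finset V) ∈ orientBlocks r) :=
  unique_second_cyclic_point_general B r a b c hB hr hblock h1 h2 h3
end
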